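/- arXiv:2211.03129 — 5 statements merged into one kernel-verified Lean document; each statement's English description precedes it below -/
import Mathlib

section
/- The circulant digraph C₇(1,2) on vertex set ZMod 7, with arcs (i, i+1) and (i, i+2) for all i, is a strongly connected digraph on 7 vertices containing no directed cycle of length 2 or 3, in which every vertex has out-degree exactly 2 and in-degree exactly 2. -/
open scoped Classical

noncomputable section

/-- `D` has a directed cycle of length `ℓ`: `ℓ` distinct vertices cyclically joined by arcs. -/
def HasDicycle {V : Type*} (A : V → V → Prop) (ℓ : ℕ) : Prop :=
  ∃ c : ZMod ℓ → V, Function.Injective c ∧ ∀ i, A (c i) (c (i + 1))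

/-- Strong connectivity: every vertex reachable from every vertex. -/
def Strong {V : Type*} (A : V → V → Prop) : Prop :=
  ∀ u v : V, Relation.ReflTransGen A u v

def outDeg {V : Type*} [Fintype V] (A : V → V → Prop) (v : V) : ℕ :=
  (Finset.univ.filter fun u => A v u).card

def inDeg {V : Type*} [Fintype V] (A : V → V → Prop) (v : V) : ℕ :=
  (Finset.univ.filter fun u => A u v).card

def arcs {V : Type*} [Fintype V] (A : V → V → Prop) : ℕ :=
  (Finset.univ.filter fun p : V × V => A p.1 p.2).card

/-- The circulant digraph C₇(1,2) on `ZMod 7`. -/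
def C7 (i j : ZMod 7) : Prop := j = i + 1 ∨ j = i + 2

section Circulant

variable {n : ℕ}

theorem strong_of_forall_add_one [NeZero n] (A : ZMod n → ZMod n → Prop)
    (hA : ∀ i, A i (i + 1)) : Strong A := by
  have reach (u : ZMod n) (k : ℕ) : Relation.ReflTransGen A u (u + k) := by
    induction k with
    | zero => simpa using Relation.ReflTransGen.refl
    | succ k ih => simpa [add_assoc] using ih.tail (hA _)
  intro u v
  simpa using reach u (v - u).val

/-- The differences `c (i + 1) - c i` along a closed walk telescope to `0`, whereas a sum of
`ℓ` steps from `[1, m]` lies strictly between `0` and `n`. -/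
theorem not_hasDicycle_of_steps_mem_Icc (A : ZMod n → ZMod n → Prop) {m ℓ : ℕ} [NeZero ℓ]
    (hA : ∀ i j, A i j → ∃ d ∈ Finset.Icc (1 : ℕ) m, j - i = (d : ZMod n)) (hℓ : ℓ * m < n) :
    ¬ HasDicycle A ℓ := by
  rintro ⟨c, -, hc⟩
  choose d hd hdc using fun i => hA _ _ (hc i)
  have htelescope : ∑ i, (c (i + 1) - c i) = 0 := by
    rw [Finset.sum_sub_distrib, sub_eq_zero]
    exact Equiv.sum_comp (Equiv.addRight 1) c
  have hdvd : n ∣ ∑ i, d i := by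
    rw [← ZMod.natCast_eq_zero_iff, Nat.cast_sum, ← htelescope]
    exact Finset.sum_congr rfl fun i _ => (hdc i).symm
  have hlower : ℓ ≤ ∑ i, d i := by
    simpa using Finset.card_nsmul_le_sum Finset.univ d 1 fun i _ => (Finset.mem_Icc.1 (hd i)).1
  have hupper : ∑ i, d i ≤ ℓ * m := by
    simpa using Finset.sum_le_card_nsmul Finset.univ d m fun i _ => (Finset.mem_Icc.1 (hd i)).2
  exact Nat.not_dvd_of_pos_of_lt (lt_of_lt_of_le (NeZero.pos ℓ) hlower)
    (hupper.trans_lt hℓ) hdvd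

end Circulant

section Degree

variable {G : Type*} [AddCommGroup G] [Fintype G]

theorem outDeg_eq_card_of_iff_sub_mem {A : G → G → Prop} {S : Finset G}
    (hA : ∀ i j, A i j ↔ j - i ∈ S) (v : G) : outDeg A v = S.card := by
  unfold outDeg
  refine Finset.card_nbij' (· - v) (· + v) ?_ ?_ ?_ ?_ <;> intro x _ <;> simp_all

theorem inDeg_eq_card_of_iff_sub_mem {A : G → G → Prop} {S : Finset G}
    (hA : ∀ i j, A i j ↔ j - i ∈ S) (v : G) : inDeg A v = S.card := by
  unfold inDeg
  refine Finset.card_nbij' (v - ·) (v - ·) ?_ ?_ ?_ ?_ <;> intro x _ <;> simp_all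

end Degree

theorem c7_iff_sub_mem (i j : ZMod 7) : C7 i j ↔ j - i ∈ ({1, 2} : Finset (ZMod 7)) := by
  simp [C7, sub_eq_iff_eq_add']

theorem exists_mem_Icc_sub_eq_of_c7 (i j : ZMod 7) (h : C7 i j) :
    ∃ d ∈ Finset.Icc (1 : ℕ) 2, j - i = (d : ZMod 7) := by
  rcases h with rfl | rfl
  exacts [⟨1, by decide, by simp⟩, ⟨2, by decide, by simp⟩]

theorem stmt1 :
    Fintype.card (ZMod 7) = 7 ∧
    (∀ i, ¬ C7 i i) ∧
    Strong C7 ∧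
    ¬ HasDicycle C7 2 ∧ ¬ HasDicycle C7 3 ∧
    (∀ v, outDeg C7 v = 2 ∧ inDeg C7 v = 2) := by
  refine ⟨ZMod.card 7, fun i => ?_, strong_of_forall_add_one C7 fun _ => Or.inl rfl,
    not_hasDicycle_of_steps_mem_Icc C7 exists_mem_Icc_sub_eq_of_c7 (by norm_num),
    not_hasDicycle_of_steps_mem_Icc C7 exists_mem_Icc_sub_eq_of_c7 (by norm_num),
    fun v => ⟨outDeg_eq_card_of_iff_sub_mem c7_iff_sub_mem v,
      inDeg_eq_card_of_iff_sub_mem c7_iff_sub_mem v⟩⟩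
  rw [c7_iff_sub_mem, sub_self]
  decide
end
end

section
/- Let D be a strongly connected digraph on n ≥ 4 vertices with no directed cycle of length 2 or 3 in which every vertex has out-degree at least 1 and in-degree at least 1. Then the number of arcs of D is at most C(n−1, 2) + 1. -/
/-!
Call two vertices co-connected if they lie in the same component of the complement of the
underlying graph of `D`; vertices that are not co-connected are adjacent. Since `D` has no
2- or 3-cycles, two vertices at distance two on a shortest path are non-adjacent, so a shortest
path alternates between two co-components. If `s → m → k` with `s, m, k` in three different
co-components, then `m` dominates every vertex of a shortest path from `k` to `s` (for adjacent
`m, b`, the arcs `m → a → b` force `m → b`), contradicting `s → m`. Hence the complement has at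
most two components, so at least `n - 2` edges, and `D` has at most
`C(n, 2) - (n - 2) = C(n - 1, 2) + 1` arcs.
-/

open scoped Classical

noncomputable section

open Relation SimpleGraph Finset

namespace Relation.ReflTransGen

variable {α : Type*} {r : α → α → Prop} {a b : α}

theorem exists_path (h : ReflTransGen r a b) :
    ∃ (k : ℕ) (g : ℕ → α), g 0 = a ∧ g k = b ∧ ∀ i < k, r (g i) (g (i + 1)) := by
  induction h using head_induction_on with
  | refl => exact ⟨0, fun _ => b, rfl, rfl, by simp⟩
  | @head a c hac _ ih =>
    obtain ⟨k, g, hg0, hgk, hg⟩ := ih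
    refine ⟨k + 1, fun | 0 => a | i + 1 => g i, rfl, hgk, ?_⟩
    rintro (_ | i) hi
    · simpa [hg0] using hac
    · exact hg i (by omega)

theorem exists_path_without_shortcut (h : ReflTransGen r a b) :
    ∃ (k : ℕ) (g : ℕ → α), g 0 = a ∧ g k = b ∧ (∀ i < k, r (g i) (g (i + 1))) ∧
      ∀ i, i + 2 ≤ k → ¬r (g i) (g (i + 2)) := by
  have hex := h.exists_path
  obtain ⟨g, hg0, hgk, hg⟩ := Nat.find_spec hex
  refine ⟨Nat.find hex, g, hg0, hgk, hg, fun i hi hshort => ?_⟩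
  -- skipping the vertex `g (i + 1)` would give a shorter path
  refine Nat.find_min hex (m := Nat.find hex - 1) (by omega)
    ⟨fun j => if j ≤ i then g j else g (j + 1), by simp [hg0], ?_, fun j hj => ?_⟩
  · simp only [show ¬Nat.find hex - 1 ≤ i by omega, if_false]
    rwa [Nat.sub_add_cancel (by omega)]
  · rcases lt_trichotomy j i with hji | rfl | hij
    · simpa [hji.le, Nat.succ_le_of_lt hji] using hg j (by omega)
    · simpa using hshort
    · simpa [hij.not_ge, show ¬j + 1 ≤ i by omega] using hg (j + 1) (by omega)

end Relation.ReflTransGen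

section NonAdjacency

variable {V : Type*} {A : V → V → Prop}

theorem arc_or_arc_of_not_reachable {u v : V} (h : ¬(fromRel A)ᶜ.Reachable u v) :
    A u v ∨ A v u := by
  by_contra! hna
  have huv : u ≠ v := by rintro rfl; exact h .rfl
  exact h (Adj.reachable (by simp [huv, hna.1, hna.2]))

variable (htri : ∀ a b c, A a b → A b c → ¬A c a)
include htri

theorem arc_trans_of_not_reachable {a b c : V} (hab : A a b) (hbc : A b c)
    (hac : ¬(fromRel A)ᶜ.Reachable a c) : A a c :=
  (arc_or_arc_of_not_reachable hac).resolve_right (htri a b c hab hbc)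

theorem reachable_of_path_without_shortcut {k : ℕ} {g : ℕ → V}
    (hg : ∀ i < k, A (g i) (g (i + 1))) (hshort : ∀ i, i + 2 ≤ k → ¬A (g i) (g (i + 2))) :
    ∀ i ≤ k, (fromRel A)ᶜ.Reachable (g 0) (g i) ∨ (fromRel A)ᶜ.Reachable (g 1) (g i) := by
  intro i
  induction i using Nat.twoStepInduction with
  | zero => exact fun _ => .inl .rfl
  | one => exact fun _ => .inr .rfl
  | more i ih _ =>
    intro hi
    have hstep : (fromRel A)ᶜ.Reachable (g i) (g (i + 2)) := by
      by_contra hnr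
      rcases arc_or_arc_of_not_reachable hnr with hfwd | hbwd
      · exact hshort i hi hfwd
      · exact htri _ _ _ (hg i (by omega)) (hg (i + 1) (by omega)) hbwd
    exact (ih (by omega)).imp (·.trans hstep) (·.trans hstep)

variable (hasymm : ∀ a b, A a b → ¬A b a) (hstrong : Strong A)
include hasymm hstrong

theorem false_of_arc_arc_of_not_reachable {s m k : V} (hsm : A s m) (hmk : A m k)
    (hnsm : ¬(fromRel A)ᶜ.Reachable s m) (hnmk : ¬(fromRel A)ᶜ.Reachable m k)
    (hnks : ¬(fromRel A)ᶜ.Reachable k s) : False := by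
  obtain ⟨r, g, hg0, hgr, hg, hshort⟩ := (hstrong k s).exists_path_without_shortcut
  have halt := reachable_of_path_without_shortcut htri hg hshort
  have hg1 : (fromRel A)ᶜ.Reachable (g 1) s := by
    simpa [hg0, hgr, hnks] using halt r le_rfl
  have hoff : ∀ i ≤ r, ¬(fromRel A)ᶜ.Reachable m (g i) := by
    intro i hi hmi
    rcases halt i hi with hki | hsi
    · exact hnmk (hmi.trans (hg0 ▸ hki.symm))
    · exact hnsm ((hg1.symm.trans hsi).trans hmi.symm)
  have hdom : ∀ i ≤ r, A m (g i) := by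
    intro i
    induction i with
    | zero => exact fun _ => hg0 ▸ hmk
    | succ i ih =>
      exact fun hi => arc_trans_of_not_reachable htri (ih (by omega)) (hg i hi) (hoff _ hi)
  exact hasymm _ _ hsm (hgr ▸ hdom r le_rfl)

theorem reachable_or_reachable_or_reachable (x y z : V) :
    (fromRel A)ᶜ.Reachable x y ∨ (fromRel A)ᶜ.Reachable y z ∨ (fromRel A)ᶜ.Reachable x z := by
  by_contra! ⟨hxy, hyz, hxz⟩
  have key := @false_of_arc_arc_of_not_reachable V A htri hasymm hstrong
  have hyx := mt Reachable.symm hxy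
  have hzy := mt Reachable.symm hyz
  have hzx := mt Reachable.symm hxz
  rcases arc_or_arc_of_not_reachable hxy with axy | ayx <;>
  rcases arc_or_arc_of_not_reachable hyz with ayz | azy
  · exact key axy ayz hxy hyz hzx
  · rcases arc_or_arc_of_not_reachable hxz with axz | azx
    · exact key axz azy hxz hzy hyx
    · exact key azx axy hzx hxy hyz
  · rcases arc_or_arc_of_not_reachable hxz with axz | azx
    · exact key ayx axz hyx hxz hzy
    · exact key ayz azx hyz hzx hxy
  · exact key azy ayx hzy hyx hxz

end NonAdjacency

namespace SimpleGraph

variable {V : Type*} (H : SimpleGraph V)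

theorem card_le_card_edgeSet_add_two [Finite V]
    (h : ∀ x y z, H.Reachable x y ∨ H.Reachable y z ∨ H.Reachable x z) :
    Nat.card V ≤ Nat.card H.edgeSet + 2 := by
  rcases isEmpty_or_nonempty V with hV | hV
  · simp
  by_cases hpre : H.Preconnected
  · have := (Connected.mk hpre).card_vert_le_card_edgeSet_add_one
    omega
  obtain ⟨a, b, hab⟩ : ∃ a b, ¬H.Reachable a b := by simpa [Preconnected] using hpre
  have hne : a ≠ b := by rintro rfl; exact hab .rfl
  -- one extra edge joins the at most two components
  have hconn : (H ⊔ edge a b).Connected := by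
    have hreach : ∀ x, (H ⊔ edge a b).Reachable a x := by
      intro x
      rcases h a b x with hab' | hbx | hax
      · exact absurd hab' hab
      · exact (Adj.reachable (by simp [edge_adj, hne])).trans (hbx.mono le_sup_left)
      · exact hax.mono le_sup_left
    exact ⟨fun x y => (hreach x).symm.trans (hreach y)⟩
  have hedges : Nat.card (H ⊔ edge a b).edgeSet ≤ Nat.card H.edgeSet + 1 := by
    simp only [Nat.card_coe_set_eq, edgeSet_sup, edgeSet_edge_of_ne hne, Set.union_singleton]
    exact Set.ncard_insert_le _ _
  have := hconn.card_vert_le_card_edgeSet_add_one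
  omega

theorem card_edgeFinset_add_card_edgeFinset_compl [Fintype V] [DecidableEq V] [DecidableRel H.Adj] :
    #H.edgeFinset + #Hᶜ.edgeFinset = (Fintype.card V).choose 2 := by
  rw [← card_union_of_disjoint (disjoint_edgeFinset.2 disjoint_compl_right), ← edgeFinset_sup,
    ← card_edgeFinset_top_eq_card_choose_two]
  congr! 2
  exact sup_compl_eq_top

end SimpleGraph

section Arcs

variable {V : Type*} {A : V → V → Prop}

theorem asymm_of_not_hasDicycle_two (hirr : ∀ v, ¬A v v) (h2 : ¬HasDicycle A 2) (a b : V)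
    (hab : A a b) (hba : A b a) : False := by
  have hne : a ≠ b := by rintro rfl; exact hirr a hab
  refine h2 ⟨![a, b], fun i j hij => ?_, fun i => ?_⟩
  · fin_cases i <;> fin_cases j <;> first | rfl | simp_all [eq_comm]
  · fin_cases i
    · exact hab
    · exact hba

theorem not_triangle_of_not_hasDicycle_three (hirr : ∀ v, ¬A v v)
    (hasymm : ∀ a b, A a b → ¬A b a) (h3 : ¬HasDicycle A 3) (a b c : V)
    (hab : A a b) (hbc : A b c) (hca : A c a) : False := by
  have hab' : a ≠ b := by rintro rfl; exact hirr a hab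
  have hbc' : b ≠ c := by rintro rfl; exact hirr b hbc
  have hac' : a ≠ c := by rintro rfl; exact hasymm a b hab hbc
  refine h3 ⟨![a, b, c], fun i j hij => ?_, fun i => ?_⟩
  · fin_cases i <;> fin_cases j <;> first | rfl | simp_all [eq_comm]
  · fin_cases i
    · exact hab
    · exact hbc
    · exact hca

theorem arcs_eq_card_edgeFinset_fromRel [Fintype V] (hirr : ∀ v, ¬A v v)
    (hasymm : ∀ a b, A a b → ¬A b a) : arcs A = #(fromRel A).edgeFinset := by
  refine card_bij (fun p _ => s(p.1, p.2)) (fun p hp => ?_) (fun p hp q hq hpq => ?_) ?_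
  · have hp : A p.1 p.2 := (mem_filter.1 hp).2
    have hne : p.1 ≠ p.2 := fun h => hirr p.2 (h ▸ hp)
    simp [hp, hne]
  · rcases Sym2.eq_iff.1 hpq with ⟨h1, h2⟩ | ⟨h1, h2⟩
    · exact Prod.ext h1 h2
    · exact absurd (h1 ▸ h2 ▸ (mem_filter.1 hq).2) (hasymm _ _ (mem_filter.1 hp).2)
  · intro e he
    induction e using Sym2.ind with
    | _ u v =>
    obtain ⟨-, huv | hvu⟩ := by simpa using he
    · exact ⟨(u, v), by simpa [arcs] using huv, rfl⟩
    · exact ⟨(v, u), by simpa using hvu, Sym2.eq_swap⟩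

end Arcs

theorem stmt6_general {V : Type*} [Fintype V] {n : ℕ} (hn : Fintype.card V = n)
    (A : V → V → Prop)
    (hirr : ∀ v, ¬ A v v) (hstrong : Strong A)
    (h2 : ¬ HasDicycle A 2) (h3 : ¬ HasDicycle A 3) :
    arcs A ≤ Nat.choose (n - 1) 2 + 1 := by
  have hasymm := asymm_of_not_hasDicycle_two hirr h2
  have htri := not_triangle_of_not_hasDicycle_three hirr hasymm h3
  have hnonadj : n ≤ #(fromRel A)ᶜ.edgeFinset + 2 := by
    have := card_le_card_edgeSet_add_two _
      (reachable_or_reachable_or_reachable htri hasymm hstrong)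
    rwa [Nat.card_eq_fintype_card, Nat.card_eq_fintype_card, ← edgeFinset_card, hn] at this
  have hpairs := card_edgeFinset_add_card_edgeFinset_compl (fromRel A)
  rw [← arcs_eq_card_edgeFinset_fromRel hirr hasymm, hn] at hpairs
  have hchoose : n.choose 2 = (n - 1).choose 2 + (n - 1) := by
    cases n with
    | zero => rfl
    | succ m => simp [Nat.choose_succ_succ', add_comm]
  omega

theorem stmt6 {V : Type*} [Fintype V] {n : ℕ} (hn : Fintype.card V = n)
    (hn4 : 4 ≤ n) (A : V → V → Prop)
    (hirr : ∀ v, ¬ A v v) (hstrong : Strong A)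
    (h2 : ¬ HasDicycle A 2) (h3 : ¬ HasDicycle A 3)
    (hout : ∀ v, 1 ≤ outDeg A v) (hin : ∀ v, 1 ≤ inDeg A v) :
    arcs A ≤ Nat.choose (n - 1) 2 + 1 :=
  stmt6_general hn A hirr hstrong h2 h3
end
end

section
/- There is no strongly connected digraph on at most 6 vertices with no directed cycle of length 2 or 3 in which every vertex has out-degree at least 2. -/
open scoped Classical

noncomputable section

/-
An arc `u → v` of a digraph without loops, 2-cycles and 3-cycles makes `{u, v}`, the
out-neighbourhood of `v` and the in-neighbourhood of `u` pairwise disjoint, so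
`2 + d⁺(v) + d⁻(u) ≤ n ≤ 6`. As `d⁺ ≥ 2`, every in-degree is at most `2`, and since in- and
out-degrees have the same sum, every in-degree is exactly `2`. Then for an arc `v → a` the three
sets cover all vertices; applied to two out-neighbours `a ≠ b` of `v`, this forces both `a → b`
and `b → a`.
-/

section Digraph

variable {V : Type*} {A : V → V → Prop}

theorem hasDicycle_two_of_arcs {u v : V} (huv : u ≠ v) (h₁ : A u v) (h₂ : A v u) : HasDicycle A 2 := by
  refine ⟨![u, v], fun i j hij => ?_, fun i => ?_⟩
  · fin_cases i <;> fin_cases j <;> first | rfl | simp_all [eq_comm]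
  · fin_cases i
    exacts [h₁, h₂]

theorem hasDicycle_three_of_arcs {u v w : V} (huv : u ≠ v) (hvw : v ≠ w) (huw : u ≠ w)
    (h₁ : A u v) (h₂ : A v w) (h₃ : A w u) : HasDicycle A 3 := by
  refine ⟨![u, v, w], fun i j hij => ?_, fun i => ?_⟩
  · fin_cases i <;> fin_cases j <;> first | rfl | simp_all [eq_comm]
  · fin_cases i
    exacts [h₁, h₂, h₃]

theorem asymm_of_not_hasDicycle_two_of_arcs (hirr : ∀ v, ¬ A v v) (h2 : ¬ HasDicycle A 2) {u v : V}
    (huv : A u v) : ¬ A v u := fun hvu =>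
  h2 <| hasDicycle_two_of_arcs (by rintro rfl; exact hirr u huv) huv hvu

theorem not_triangle_of_not_hasDicycle (hirr : ∀ v, ¬ A v v) (h2 : ¬ HasDicycle A 2)
    (h3 : ¬ HasDicycle A 3) {u v w : V} (huv : A u v) (hvw : A v w) : ¬ A w u := fun hwu =>
  h3 <| hasDicycle_three_of_arcs (by rintro rfl; exact hirr u huv) (by rintro rfl; exact hirr v hvw)
    (by rintro rfl; exact asymm_of_not_hasDicycle_two_of_arcs hirr h2 huv hvw) huv hvw hwu

variable [Fintype V]

theorem sum_outDeg_eq_arcs : ∑ v, outDeg A v = arcs A := by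
  simp only [outDeg, arcs, Finset.card_filter, Fintype.sum_prod_type]

theorem sum_inDeg_eq_arcs : ∑ v, inDeg A v = arcs A := by
  simp only [inDeg, arcs, Finset.card_filter, Fintype.sum_prod_type]
  exact Finset.sum_comm

theorem inDeg_eq_of_le_outDeg {k : ℕ} (hout : ∀ v, k ≤ outDeg A v) (hin : ∀ v, inDeg A v ≤ k)
    (v : V) : inDeg A v = k := by
  have hsum : ∑ _ : V, k ≤ ∑ w, inDeg A w := by
    rw [sum_inDeg_eq_arcs, ← sum_outDeg_eq_arcs]
    exact Finset.sum_le_sum fun w _ => hout w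
  exact (Finset.sum_eq_sum_iff_of_le fun w _ => hin w).1
    (le_antisymm (Finset.sum_le_sum fun w _ => hin w) hsum) v (Finset.mem_univ v)

open Finset

theorem card_arc_union_nbhds (hasymm : ∀ u v, A u v → ¬ A v u)
    (htri : ∀ u v w, A u v → A v w → ¬ A w u) {u v : V} (huv : A u v) :
    #({u, v} ∪ univ.filter (A v ·) ∪ univ.filter (A · u)) = 2 + outDeg A v + inDeg A u := by
  have hne : u ≠ v := by rintro rfl; exact hasymm u u huv huv
  have hdisj₁ : Disjoint {u, v} (univ.filter (A v ·)) := by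
    simp only [disjoint_left, mem_insert, mem_singleton, mem_filter, mem_univ, true_and]
    rintro x (rfl | rfl) hvx
    exacts [hasymm _ _ huv hvx, hasymm _ _ hvx hvx]
  have hdisj₂ : Disjoint ({u, v} ∪ univ.filter (A v ·)) (univ.filter (A · u)) := by
    simp only [disjoint_left, mem_union, mem_insert, mem_singleton, mem_filter, mem_univ,
      true_and]
    rintro x ((rfl | rfl) | hvx) hxu
    exacts [hasymm _ _ hxu hxu, hasymm _ _ huv hxu, htri _ _ _ huv hvx hxu]
  rw [card_union_of_disjoint hdisj₂, card_union_of_disjoint hdisj₁, card_pair hne]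
  rfl

theorem two_add_outDeg_add_inDeg_le_card (hasymm : ∀ u v, A u v → ¬ A v u)
    (htri : ∀ u v w, A u v → A v w → ¬ A w u) {u v : V} (huv : A u v) :
    2 + outDeg A v + inDeg A u ≤ Fintype.card V :=
  card_arc_union_nbhds hasymm htri huv ▸ card_le_univ _

theorem outNbrs_adj_of_card_le (hasymm : ∀ u v, A u v → ¬ A v u)
    (htri : ∀ u v w, A u v → A v w → ¬ A w u) {v a b : V} (hva : A v a) (hvb : A v b)
    (hab : a ≠ b) (hcard : Fintype.card V ≤ 2 + outDeg A a + inDeg A v) : A a b := by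
  have hcover : {v, a} ∪ univ.filter (A a ·) ∪ univ.filter (A · v) = univ :=
    eq_univ_of_card _ <| le_antisymm (card_le_univ _)
      (card_arc_union_nbhds hasymm htri hva ▸ hcard)
  have hb := hcover ▸ mem_univ b
  simp only [mem_union, mem_insert, mem_singleton, mem_filter, mem_univ, true_and] at hb
  rcases hb with ((rfl | rfl) | hAab) | hbv
  exacts [absurd hvb (hasymm _ _ hvb), absurd rfl hab, hAab, absurd hbv (hasymm _ _ hvb)]

end Digraph

theorem stmt9_general {V : Type*} [Fintype V] [Nonempty V]
    (hcard : Fintype.card V ≤ 6) (A : V → V → Prop)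
    (hirr : ∀ v, ¬ A v v)
    (h2 : ¬ HasDicycle A 2) (h3 : ¬ HasDicycle A 3)
    (hout : ∀ v, 2 ≤ outDeg A v) : False := by
  have hasymm : ∀ u v, A u v → ¬ A v u := fun _ _ => asymm_of_not_hasDicycle_two_of_arcs hirr h2
  have htri : ∀ u v w, A u v → A v w → ¬ A w u := fun _ _ _ =>
    not_triangle_of_not_hasDicycle hirr h2 h3
  have houtNbrs : ∀ v, 1 < (Finset.univ.filter (A v ·)).card := hout
  have hin : ∀ v, inDeg A v = 2 := inDeg_eq_of_le_outDeg hout fun u => by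
    obtain ⟨v, hv, -⟩ := Finset.one_lt_card.1 (houtNbrs u)
    have := two_add_outDeg_add_inDeg_le_card hasymm htri (Finset.mem_filter.1 hv).2
    have := hout v
    omega
  obtain ⟨v⟩ := ‹Nonempty V›
  obtain ⟨a, ha, b, hb, hab⟩ := Finset.one_lt_card.1 (houtNbrs v)
  rw [Finset.mem_filter] at ha hb
  have hfull : ∀ x, Fintype.card V ≤ 2 + outDeg A x + inDeg A v := fun x => by
    have := hout x
    have := hin v
    omega
  exact hasymm a b (outNbrs_adj_of_card_le hasymm htri ha.2 hb.2 hab (hfull a))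
    (outNbrs_adj_of_card_le hasymm htri hb.2 ha.2 (Ne.symm hab) (hfull b))

theorem stmt9 {V : Type*} [Fintype V] [Nonempty V]
    (hcard : Fintype.card V ≤ 6) (A : V → V → Prop)
    (hirr : ∀ v, ¬ A v v) (hstrong : Strong A)
    (h2 : ¬ HasDicycle A 2) (h3 : ¬ HasDicycle A 3)
    (hout : ∀ v, 2 ≤ outDeg A v) : False :=
  stmt9_general hcard A hirr h2 h3 hout
end
end

section
/- Let D be a strongly connected digraph in which every vertex has out-degree at least 2. Then there exists a vertex v such that the digraph obtained from D by deleting v (and all arcs incident with v) is still strongly connected. -/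
/-!
Take a maximal proper vertex set `W` inducing a strong subdigraph, an arc `x → z` leaving `W`,
and a shortest walk `p` from `z` back into `W`. The ear `x → z → ⋯ → p t` can be added to `W`
without losing strong connectivity, so by maximality it covers every vertex. If `t ≥ 2`, every
out-neighbour `u` of `z` lies on the ear, and minimality of `t` forces `u = p 1`, contradicting
out-degree at least two. Hence `t = 1`, `W` misses only `z`, and deleting `z` leaves a strong
digraph.
-/

open scoped Classical

noncomputable section

open Relation Set

section Walks

variable {V : Type*} (A : V → V → Prop)

def RelOn (S : Set V) : V → V → Prop :=
  fun a b => a ∈ S ∧ b ∈ S ∧ A a b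

def StrongOn (S : Set V) : Prop :=
  ∀ a ∈ S, ∀ b ∈ S, ReflTransGen (RelOn A S) a b

def HasWalkInto (a : V) (S : Set V) (n : ℕ) : Prop :=
  ∃ p : ℕ → V, p 0 = a ∧ p n ∈ S ∧ ∀ i < n, A (p i) (p (i + 1))

variable {A}

theorem reflTransGen_relOn_mono {S T : Set V} (hST : S ⊆ T) {a b : V}
    (hab : ReflTransGen (RelOn A S) a b) : ReflTransGen (RelOn A T) a b :=
  ReflTransGen.mono (fun _ _ h => ⟨hST h.1, hST h.2.1, h.2.2⟩) _ _ hab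

theorem exists_arc_of_reflTransGen {S : Set V} {a b : V} (hab : ReflTransGen A a b)
    (ha : a ∈ S) (hb : b ∉ S) : ∃ x ∈ S, ∃ z ∉ S, A x z := by
  induction hab with
  | refl => exact absurd ha hb
  | @tail c d _ hcd ih =>
    by_cases hc : c ∈ S
    · exact ⟨c, hc, d, hb, hcd⟩
    · exact ih hc

theorem reflTransGen_relOn_of_walk {S : Set V} {p : ℕ → V} {t : ℕ}
    (hp : ∀ i < t, A (p i) (p (i + 1))) (hS : ∀ i ≤ t, p i ∈ S) {i j : ℕ} (hij : i ≤ j)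
    (hjt : j ≤ t) : ReflTransGen (RelOn A S) (p i) (p j) := by
  induction j, hij using Nat.le_induction with
  | base => exact .refl
  | succ j _ ih => exact (ih (by omega)).tail ⟨hS j (by omega), hS (j + 1) hjt, hp j (by omega)⟩

theorem StrongOn.union_ear {W : Set V} (hW : StrongOn A W) {x : V} (hx : x ∈ W) {p : ℕ → V}
    {t : ℕ} (hxp : A x (p 0)) (hp : ∀ i < t, A (p i) (p (i + 1))) (ht : p t ∈ W) :
    StrongOn A (W ∪ p '' Iic t) := by
  set S := W ∪ p '' Iic t
  have hpS : ∀ i ≤ t, p i ∈ S := fun i hi => Or.inr ⟨i, hi, rfl⟩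
  have toW : ∀ a ∈ S, ∃ w ∈ W, ReflTransGen (RelOn A S) a w := by
    rintro a (ha | ⟨i, hi, rfl⟩)
    · exact ⟨a, ha, .refl⟩
    · exact ⟨p t, ht, reflTransGen_relOn_of_walk hp hpS hi le_rfl⟩
  have fromW : ∀ b ∈ S, ∃ w ∈ W, ReflTransGen (RelOn A S) w b := by
    rintro b (hb | ⟨i, hi, rfl⟩)
    · exact ⟨b, hb, .refl⟩
    · exact ⟨x, hx, .head ⟨Or.inl hx, hpS 0 (Nat.zero_le t), hxp⟩
        (reflTransGen_relOn_of_walk hp hpS (Nat.zero_le i) hi)⟩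
  intro a ha b hb
  obtain ⟨a', ha', haa'⟩ := toW a ha
  obtain ⟨b', hb', hb'b⟩ := fromW b hb
  exact (haa'.trans (reflTransGen_relOn_mono subset_union_left (hW a' ha' b' hb'))).trans hb'b

theorem StrongOn.strong_subtype {S : Set V} (hS : StrongOn A S) :
    Strong (fun a b : S => A a.1 b.1) := by
  suffices h : ∀ {a b : V}, ReflTransGen (RelOn A S) a b → ∀ (ha : a ∈ S) (hb : b ∈ S),
      ReflTransGen (fun a b : S => A a.1 b.1) ⟨a, ha⟩ ⟨b, hb⟩ from
    fun a b => h (hS a a.2 b b.2) a.2 b.2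
  intro a b hab
  induction hab with
  | refl => exact fun _ _ => .refl
  | tail _ hcd ih => exact fun ha _ => (ih ha hcd.1).tail hcd.2.2

theorem HasWalkInto.of_mem {S : Set V} {a : V} (ha : a ∈ S) : HasWalkInto A a S 0 :=
  ⟨fun _ => a, rfl, ha, fun _ h => absurd h (Nat.not_lt_zero _)⟩

theorem HasWalkInto.cons {S : Set V} {a b : V} {n : ℕ} (hab : A a b)
    (hb : HasWalkInto A b S n) : HasWalkInto A a S (n + 1) := by
  obtain ⟨p, hp0, hpn, hp⟩ := hb
  refine ⟨fun i => if i = 0 then a else p (i - 1), rfl, by simpa using hpn, ?_⟩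
  rintro (_ | i) hi
  · simpa [hp0] using hab
  · simpa using hp i (by omega)

theorem hasWalkInto_suffix {S : Set V} {p : ℕ → V} {t : ℕ}
    (hp : ∀ i < t, A (p i) (p (i + 1))) (ht : p t ∈ S) {j : ℕ} (hj : j ≤ t) :
    HasWalkInto A (p j) S (t - j) :=
  ⟨fun i => p (j + i), rfl, by simpa only [Nat.add_sub_cancel' hj],
    fun i hi => hp (j + i) (by omega)⟩

theorem exists_hasWalkInto {S : Set V} {a b : V} (hab : ReflTransGen A a b) (hb : b ∈ S) :
    ∃ n, HasWalkInto A a S n := by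
  induction hab using ReflTransGen.head_induction_on with
  | refl => exact ⟨0, .of_mem hb⟩
  | head hac _ ih =>
    obtain ⟨n, hn⟩ := ih
    exact ⟨n + 1, hn.cons hac⟩

variable [Fintype V]

theorem exists_maximal_strongOn (hcard : 2 ≤ Fintype.card V) :
    ∃ W : Set V, W.Nonempty ∧ Maximal (fun S => S ≠ univ ∧ StrongOn A S) W := by
  obtain ⟨w⟩ : Nonempty V := Fintype.card_pos_iff.mp (by omega)
  have hw : {w} ≠ univ ∧ StrongOn A {w} := by
    refine ⟨fun h => ?_, ?_⟩
    · have := congrArg Set.ncard h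
      rw [ncard_singleton, ncard_univ, Nat.card_eq_fintype_card] at this
      omega
    · rintro a rfl b rfl
      exact .refl
  obtain ⟨W, hwW, hW⟩ :=
    Finite.exists_le_maximal (p := fun S : Set V => S ≠ univ ∧ StrongOn A S) hw
  exact ⟨W, ⟨w, hwW rfl⟩, hW⟩

theorem exists_eq_compl_singleton_of_maximal (hirr : ∀ v, ¬ A v v) (hstrong : Strong A)
    (hout : ∀ v, 2 ≤ outDeg A v) {W : Set V} (hWne : W.Nonempty)
    (hW : Maximal (fun S => S ≠ univ ∧ StrongOn A S) W) : ∃ z, W = {z}ᶜ := by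
  obtain ⟨w, hw⟩ := hWne
  obtain ⟨o, ho⟩ := (ne_univ_iff_exists_notMem W).mp hW.prop.1
  obtain ⟨x, hx, z, hz, hxz⟩ := exists_arc_of_reflTransGen (hstrong w o) hw ho
  have hwalk : ∃ n, HasWalkInto A z W n := exists_hasWalkInto (hstrong z w) hw
  obtain ⟨p, hp0, hpt, hp⟩ := Nat.find_spec hwalk
  set t := Nat.find hwalk
  have ht0 : t ≠ 0 := fun h => hz (by rw [← hp0, ← h]; exact hpt)
  have hear : W ∪ p '' Iic t = univ := by
    by_contra hne
    have hstr := hW.prop.2.union_ear hx (hp0 ▸ hxz) hp hpt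
    have := hW.eq_of_subset ⟨hne, hstr⟩ subset_union_left
    exact hz (this ▸ Or.inr ⟨0, Nat.zero_le t, hp0⟩)
  -- an out-neighbour `p j` of `z` yields a walk of length `t - j + 1` into `W`, so `j ≤ 1`
  have hnbr : ∀ u, A z u → t = 1 ∨ u = p 1 := by
    intro u hu
    rcases (hear ▸ mem_univ u : u ∈ W ∪ p '' Iic t) with huW | ⟨j, hj, rfl⟩
    · exact Or.inl (by have := Nat.find_min' hwalk ((HasWalkInto.of_mem huW).cons hu); omega)
    · have := Nat.find_min' hwalk ((hasWalkInto_suffix hp hpt hj).cons hu)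
      obtain rfl | rfl : j = 0 ∨ j = 1 := by rw [mem_Iic] at hj; omega
      · exact absurd (hp0 ▸ hu) (hirr z)
      · exact Or.inr rfl
  have ht1 : t = 1 := by
    by_contra ht1
    have : outDeg A z ≤ 1 := Finset.card_le_one.mpr fun a ha b hb => by
      rw [Finset.mem_filter] at ha hb
      rw [(hnbr a ha.2).resolve_left ht1, (hnbr b hb.2).resolve_left ht1]
    linarith [hout z]
  refine ⟨z, Set.ext fun v => ⟨fun hv => ne_of_mem_of_not_mem hv hz, fun hv => ?_⟩⟩
  rcases (hear ▸ mem_univ v : v ∈ W ∪ p '' Iic t) with hvW | ⟨j, hj, rfl⟩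
  · exact hvW
  · obtain rfl | rfl : j = 0 ∨ j = 1 := by rw [mem_Iic] at hj; omega
    · exact absurd hp0 hv
    · exact ht1 ▸ hpt

end Walks

theorem stmt11 {V : Type*} [Fintype V] (hcard : 2 ≤ Fintype.card V)
    (A : V → V → Prop) (hirr : ∀ v, ¬ A v v) (hstrong : Strong A)
    (hout : ∀ v, 2 ≤ outDeg A v) :
    ∃ v : V, Strong (fun a b : {u : V // u ≠ v} => A a.1 b.1) := by
  obtain ⟨W, hWne, hW⟩ := exists_maximal_strongOn (A := A) hcard
  obtain ⟨z, rfl⟩ := exists_eq_compl_singleton_of_maximal hirr hstrong hout hWne hW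
  exact ⟨z, hW.prop.2.strong_subtype⟩
end
end

section
/- Up to isomorphism, the circulant digraph C₇(1,2) is the unique strongly connected digraph on 7 vertices with no directed cycle of length 2 or 3 in which every vertex has out-degree at least 2 and in-degree at least 1. -/
open scoped Classical

noncomputable section

namespace Stmt15Aux

variable {V : Type*} {A : V → V → Prop}

/-- extract an out-neighbour different from a given vertex -/
lemma exists_out_ne [Fintype V] (v x : V) (h : 2 ≤ outDeg A v) : ∃ u, u ≠ x ∧ A v u := by
  by_contra hc
  push_neg at hc
  have hsub : (Finset.univ.filter fun u => A v u) ⊆ {x} := by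
    intro u hu
    simp only [Finset.mem_filter] at hu
    have : u = x := by
      by_contra h'
      exact hc u h' hu.2
    simp [this]
  have hle := Finset.card_le_card hsub
  rw [Finset.card_singleton] at hle
  have : 2 ≤ (Finset.univ.filter fun u => A v u).card := h
  omega

lemma exists_two_out [Fintype V] (v : V) (h : 2 ≤ outDeg A v) :
    ∃ a b, a ≠ b ∧ A v a ∧ A v b := by
  have h1 : 1 < (Finset.univ.filter fun u => A v u).card := h
  obtain ⟨a, ha, b, hb, hab⟩ := Finset.one_lt_card.mp h1
  simp only [Finset.mem_filter] at ha hb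
  exact ⟨a, b, hab, ha.2, hb.2⟩

lemma exists_in [Fintype V] (v : V) (h : 1 ≤ inDeg A v) : ∃ u, A u v := by
  have h1 : 0 < (Finset.univ.filter fun u => A u v).card := h
  obtain ⟨u, hu⟩ := Finset.card_pos.mp h1
  simp only [Finset.mem_filter] at hu
  exact ⟨u, hu.2⟩

/-- dicycle builders -/
lemma mk2 (x y : V) (nxy : x ≠ y) (h1 : A x y) (h2 : A y x) : HasDicycle A 2 := by
  refine ⟨(fun i => ![x,y] ⟨i.val, ZMod.val_lt i⟩), ?_, ?_⟩
  · intro a b hab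
    rcases (by decide : ∀ i : ZMod 2, i = 0 ∨ i = 1) a with rfl|rfl <;>
      rcases (by decide : ∀ i : ZMod 2, i = 0 ∨ i = 1) b with rfl|rfl <;>
      first
        | rfl | exact absurd hab nxy | exact absurd hab.symm nxy
  · intro i
    rcases (by decide : ∀ i : ZMod 2, i = 0 ∨ i = 1) i with rfl|rfl
    · exact h1
    · exact h2

lemma mk3 (x y z : V) (nxy : x ≠ y) (nxz : x ≠ z) (nyz : y ≠ z)
    (h1 : A x y) (h2 : A y z) (h3 : A z x) : HasDicycle A 3 := by
  refine ⟨(fun i => ![x,y,z] ⟨i.val, ZMod.val_lt i⟩), ?_, ?_⟩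
  · intro a b hab
    rcases (by decide : ∀ i : ZMod 3, i = 0 ∨ i = 1 ∨ i = 2) a with rfl|rfl|rfl <;>
      rcases (by decide : ∀ i : ZMod 3, i = 0 ∨ i = 1 ∨ i = 2) b with rfl|rfl|rfl <;>
      first
        | rfl | exact absurd hab nxy | exact absurd hab.symm nxy
        | exact absurd hab nxz | exact absurd hab.symm nxz
        | exact absurd hab nyz | exact absurd hab.symm nyz
  · intro i
    rcases (by decide : ∀ i : ZMod 3, i = 0 ∨ i = 1 ∨ i = 2) i with rfl|rfl|rfl
    · exact h1
    · exact h2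
    · exact h3

lemma mk5 (x0 x1 x2 x3 x4 : V)
    (n01 : x0 ≠ x1) (n02 : x0 ≠ x2) (n03 : x0 ≠ x3) (n04 : x0 ≠ x4)
    (n12 : x1 ≠ x2) (n13 : x1 ≠ x3) (n14 : x1 ≠ x4)
    (n23 : x2 ≠ x3) (n24 : x2 ≠ x4) (n34 : x3 ≠ x4)
    (h0 : A x0 x1) (h1 : A x1 x2) (h2 : A x2 x3) (h3 : A x3 x4) (h4 : A x4 x0) :
    HasDicycle A 5 := by
  refine ⟨(fun i => ![x0,x1,x2,x3,x4] ⟨i.val, ZMod.val_lt i⟩), ?_, ?_⟩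
  · intro a b hab
    rcases (by decide : ∀ i : ZMod 5, i = 0 ∨ i = 1 ∨ i = 2 ∨ i = 3 ∨ i = 4) a with rfl|rfl|rfl|rfl|rfl <;>
      rcases (by decide : ∀ i : ZMod 5, i = 0 ∨ i = 1 ∨ i = 2 ∨ i = 3 ∨ i = 4) b with rfl|rfl|rfl|rfl|rfl <;>
      first
        | rfl
        | exact absurd hab n01 | exact absurd hab.symm n01
        | exact absurd hab n02 | exact absurd hab.symm n02
        | exact absurd hab n03 | exact absurd hab.symm n03
        | exact absurd hab n04 | exact absurd hab.symm n04
        | exact absurd hab n12 | exact absurd hab.symm n12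
        | exact absurd hab n13 | exact absurd hab.symm n13
        | exact absurd hab n14 | exact absurd hab.symm n14
        | exact absurd hab n23 | exact absurd hab.symm n23
        | exact absurd hab n24 | exact absurd hab.symm n24
        | exact absurd hab n34 | exact absurd hab.symm n34
  · intro i
    rcases (by decide : ∀ i : ZMod 5, i = 0 ∨ i = 1 ∨ i = 2 ∨ i = 3 ∨ i = 4) i with rfl|rfl|rfl|rfl|rfl <;>
      first | exact h0 | exact h1 | exact h2 | exact h3 | exact h4

lemma mk6 (x0 x1 x2 x3 x4 x5 : V)
    (n01 : x0 ≠ x1) (n02 : x0 ≠ x2) (n03 : x0 ≠ x3) (n04 : x0 ≠ x4) (n05 : x0 ≠ x5)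
    (n12 : x1 ≠ x2) (n13 : x1 ≠ x3) (n14 : x1 ≠ x4) (n15 : x1 ≠ x5)
    (n23 : x2 ≠ x3) (n24 : x2 ≠ x4) (n25 : x2 ≠ x5)
    (n34 : x3 ≠ x4) (n35 : x3 ≠ x5) (n45 : x4 ≠ x5)
    (h0 : A x0 x1) (h1 : A x1 x2) (h2 : A x2 x3) (h3 : A x3 x4) (h4 : A x4 x5) (h5 : A x5 x0) :
    HasDicycle A 6 := by
  refine ⟨(fun i => ![x0,x1,x2,x3,x4,x5] ⟨i.val, ZMod.val_lt i⟩), ?_, ?_⟩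
  · intro a b hab
    rcases (by decide : ∀ i : ZMod 6, i = 0 ∨ i = 1 ∨ i = 2 ∨ i = 3 ∨ i = 4 ∨ i = 5) a with rfl|rfl|rfl|rfl|rfl|rfl <;>
      rcases (by decide : ∀ i : ZMod 6, i = 0 ∨ i = 1 ∨ i = 2 ∨ i = 3 ∨ i = 4 ∨ i = 5) b with rfl|rfl|rfl|rfl|rfl|rfl <;>
      first
        | rfl
        | exact absurd hab n01 | exact absurd hab.symm n01
        | exact absurd hab n02 | exact absurd hab.symm n02
        | exact absurd hab n03 | exact absurd hab.symm n03
        | exact absurd hab n04 | exact absurd hab.symm n04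
        | exact absurd hab n05 | exact absurd hab.symm n05
        | exact absurd hab n12 | exact absurd hab.symm n12
        | exact absurd hab n13 | exact absurd hab.symm n13
        | exact absurd hab n14 | exact absurd hab.symm n14
        | exact absurd hab n15 | exact absurd hab.symm n15
        | exact absurd hab n23 | exact absurd hab.symm n23
        | exact absurd hab n24 | exact absurd hab.symm n24
        | exact absurd hab n25 | exact absurd hab.symm n25
        | exact absurd hab n34 | exact absurd hab.symm n34
        | exact absurd hab n35 | exact absurd hab.symm n35
        | exact absurd hab n45 | exact absurd hab.symm n45
  · intro i
    rcases (by decide : ∀ i : ZMod 6, i = 0 ∨ i = 1 ∨ i = 2 ∨ i = 3 ∨ i = 4 ∨ i = 5) i with rfl|rfl|rfl|rfl|rfl|rfl <;>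
      first | exact h0 | exact h1 | exact h2 | exact h3 | exact h4 | exact h5

lemma mk7 (x0 x1 x2 x3 x4 x5 x6 : V)
    (n01 : x0 ≠ x1) (n02 : x0 ≠ x2) (n03 : x0 ≠ x3) (n04 : x0 ≠ x4) (n05 : x0 ≠ x5) (n06 : x0 ≠ x6)
    (n12 : x1 ≠ x2) (n13 : x1 ≠ x3) (n14 : x1 ≠ x4) (n15 : x1 ≠ x5) (n16 : x1 ≠ x6)
    (n23 : x2 ≠ x3) (n24 : x2 ≠ x4) (n25 : x2 ≠ x5) (n26 : x2 ≠ x6)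
    (n34 : x3 ≠ x4) (n35 : x3 ≠ x5) (n36 : x3 ≠ x6)
    (n45 : x4 ≠ x5) (n46 : x4 ≠ x6) (n56 : x5 ≠ x6)
    (h0 : A x0 x1) (h1 : A x1 x2) (h2 : A x2 x3) (h3 : A x3 x4) (h4 : A x4 x5) (h5 : A x5 x6)
    (h6 : A x6 x0) : HasDicycle A 7 := by
  refine ⟨(fun i => ![x0,x1,x2,x3,x4,x5,x6] ⟨i.val, ZMod.val_lt i⟩), ?_, ?_⟩
  · intro a b hab
    rcases (by decide : ∀ i : ZMod 7, i = 0 ∨ i = 1 ∨ i = 2 ∨ i = 3 ∨ i = 4 ∨ i = 5 ∨ i = 6) a with rfl|rfl|rfl|rfl|rfl|rfl|rfl <;>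
      rcases (by decide : ∀ i : ZMod 7, i = 0 ∨ i = 1 ∨ i = 2 ∨ i = 3 ∨ i = 4 ∨ i = 5 ∨ i = 6) b with rfl|rfl|rfl|rfl|rfl|rfl|rfl <;>
      first
        | rfl
        | exact absurd hab n01 | exact absurd hab.symm n01
        | exact absurd hab n02 | exact absurd hab.symm n02
        | exact absurd hab n03 | exact absurd hab.symm n03
        | exact absurd hab n04 | exact absurd hab.symm n04
        | exact absurd hab n05 | exact absurd hab.symm n05
        | exact absurd hab n06 | exact absurd hab.symm n06
        | exact absurd hab n12 | exact absurd hab.symm n12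
        | exact absurd hab n13 | exact absurd hab.symm n13
        | exact absurd hab n14 | exact absurd hab.symm n14
        | exact absurd hab n15 | exact absurd hab.symm n15
        | exact absurd hab n16 | exact absurd hab.symm n16
        | exact absurd hab n23 | exact absurd hab.symm n23
        | exact absurd hab n24 | exact absurd hab.symm n24
        | exact absurd hab n25 | exact absurd hab.symm n25
        | exact absurd hab n26 | exact absurd hab.symm n26
        | exact absurd hab n34 | exact absurd hab.symm n34
        | exact absurd hab n35 | exact absurd hab.symm n35
        | exact absurd hab n36 | exact absurd hab.symm n36
        | exact absurd hab n45 | exact absurd hab.symm n45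
        | exact absurd hab n46 | exact absurd hab.symm n46
        | exact absurd hab n56 | exact absurd hab.symm n56
  · intro i
    rcases (by decide : ∀ i : ZMod 7, i = 0 ∨ i = 1 ∨ i = 2 ∨ i = 3 ∨ i = 4 ∨ i = 5 ∨ i = 6) i with rfl|rfl|rfl|rfl|rfl|rfl|rfl <;>
      first | exact h0 | exact h1 | exact h2 | exact h3 | exact h4 | exact h5 | exact h6

/-- there is some dicycle, of length between 1 and 7 -/
lemma exists_dicycle [Fintype V] (hcard : Fintype.card V = 7)
    (hout : ∀ v : V, 2 ≤ outDeg A v) :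
    ∃ ℓ, 1 ≤ ℓ ∧ ℓ ≤ 7 ∧ HasDicycle A ℓ := by
  have hne : Nonempty V := Fintype.card_pos_iff.mp (by omega)
  obtain ⟨v0⟩ := hne
  have hnext : ∀ v : V, ∃ u, A v u := by
    intro v
    obtain ⟨a, b, hab, ha, hb⟩ := exists_two_out v (hout v)
    exact ⟨a, ha⟩
  set f : ℕ → V := fun n => (fun v => Classical.choose (hnext v))^[n] v0 with hf
  have hstep : ∀ k, A (f k) (f (k + 1)) := by
    intro k
    have : f (k+1) = Classical.choose (hnext (f k)) := by
      simp only [hf, Function.iterate_succ_apply']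
    rw [this]
    exact Classical.choose_spec (hnext (f k))
  -- pigeonhole
  have hQ : ∃ k, ∃ m, m < k ∧ k ≤ 7 ∧ f m = f k := by
    obtain ⟨x, y, hxy, hfe⟩ := Fintype.exists_ne_map_eq_of_card_lt
      (fun t : Fin 8 => f t.val) (by rw [hcard]; simp)
    rcases lt_or_gt_of_ne (fun h : x.val = y.val => hxy (Fin.ext h)) with h | h
    · exact ⟨y.val, x.val, h, by omega, hfe⟩
    · exact ⟨x.val, y.val, h, by omega, hfe.symm⟩
  set Q : ℕ → Prop := fun k => ∃ m, m < k ∧ k ≤ 7 ∧ f m = f k with hQdef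
  obtain ⟨n1, hn1⟩ := hQ
  have hQn : Q n1 := hn1
  set n0 := Nat.find ⟨n1, hQn⟩ with hn0
  obtain ⟨m0, hm0lt, hn07, hm0eq⟩ : Q n0 := Nat.find_spec ⟨n1, hQn⟩
  have hinjlt : ∀ a b, a < n0 → b < n0 → f a = f b → a = b := by
    intro a b ha hb hfe
    by_contra hne'
    rcases lt_or_gt_of_ne hne' with h | h
    · exact Nat.find_min ⟨n1, hQn⟩ hb ⟨a, h, by omega, hfe⟩
    · exact Nat.find_min ⟨n1, hQn⟩ ha ⟨b, h, by omega, hfe.symm⟩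
  set ℓ := n0 - m0 with hldef
  have hl1 : 1 ≤ ℓ := by omega
  haveI : NeZero ℓ := ⟨by omega⟩
  refine ⟨ℓ, hl1, by omega, fun i => f (m0 + i.val), ?_, ?_⟩
  · intro i j hij
    have hi := ZMod.val_lt i
    have hj := ZMod.val_lt j
    have := hinjlt (m0 + i.val) (m0 + j.val) (by omega) (by omega) hij
    have hveq : i.val = j.val := by omega
    exact ZMod.val_injective ℓ hveq
  · intro i
    have hi := ZMod.val_lt i
    have hval : (i + 1).val = (i.val + 1) % ℓ := by
      rw [ZMod.val_add, ZMod.val_one_eq_one_mod]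
      conv_rhs => rw [Nat.add_mod, Nat.mod_eq_of_lt hi]
    show A (f (m0 + i.val)) (f (m0 + (i + 1).val))
    rcases Nat.lt_or_ge (i.val + 1) ℓ with hlt | hge
    · have h1 : (i + 1).val = i.val + 1 := by rw [hval, Nat.mod_eq_of_lt hlt]
      rw [h1]
      have h2 : m0 + (i.val + 1) = (m0 + i.val) + 1 := by omega
      rw [h2]
      exact hstep _
    · have hieq : i.val + 1 = ℓ := by omega
      have h1 : (i + 1).val = 0 := by rw [hval, hieq, Nat.mod_self]
      rw [h1, Nat.add_zero, hm0eq]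
      have h2 : n0 = (m0 + i.val) + 1 := by omega
      rw [h2]
      exact hstep _

lemma compl_card [Fintype V] {n : ℕ} [NeZero n] (hcard : Fintype.card V = 7) (c : ZMod n → V)
    (hinj : Function.Injective c) (hn : n ≤ 7) :
    ((Finset.univ.image c)ᶜ : Finset V).card = 7 - n := by
  have h1 : (Finset.univ.image c).card = n := by
    rw [Finset.card_image_of_injective _ hinj, Finset.card_univ, ZMod.card]
  rw [Finset.card_compl, h1, hcard]

lemma compl_one [Fintype V] (hcard : Fintype.card V = 7) (c : ZMod 6 → V)
    (hinj : Function.Injective c) :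
    ∃ w : V, (∀ i, c i ≠ w) ∧ (∀ v : V, v = w ∨ ∃ i, v = c i) := by
  have h := compl_card hcard c hinj (by norm_num)
  obtain ⟨w, hw⟩ := Finset.card_eq_one.mp h
  have hwmem : w ∈ (Finset.univ.image c)ᶜ := by rw [hw]; exact Finset.mem_singleton_self w
  rw [Finset.mem_compl] at hwmem
  refine ⟨w, fun i hi => hwmem (Finset.mem_image.mpr ⟨i, Finset.mem_univ i, hi⟩), fun v => ?_⟩
  by_cases hv : v ∈ Finset.univ.image c
  · obtain ⟨i, _, hi⟩ := Finset.mem_image.mp hv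
    exact Or.inr ⟨i, hi.symm⟩
  · left
    have : v ∈ (Finset.univ.image c)ᶜ := Finset.mem_compl.mpr hv
    rw [hw] at this
    exact Finset.mem_singleton.mp this

lemma compl_two [Fintype V] (hcard : Fintype.card V = 7) (c : ZMod 5 → V)
    (hinj : Function.Injective c) :
    ∃ w1 w2 : V, w1 ≠ w2 ∧ (∀ i, c i ≠ w1 ∧ c i ≠ w2) ∧
      (∀ v : V, v = w1 ∨ v = w2 ∨ ∃ i, v = c i) := by
  have h := compl_card hcard c hinj (by norm_num)
  obtain ⟨w1, w2, hne, hw⟩ := Finset.card_eq_two.mp h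
  have hm : ∀ x ∈ ({w1, w2} : Finset V), x ∉ Finset.univ.image c := by
    intro x hx
    rw [← hw] at hx
    exact Finset.mem_compl.mp hx
  have h1 := hm w1 (by simp)
  have h2 := hm w2 (by simp)
  refine ⟨w1, w2, hne, fun i => ⟨fun hi => h1 (Finset.mem_image.mpr ⟨i, Finset.mem_univ i, hi⟩),
    fun hi => h2 (Finset.mem_image.mpr ⟨i, Finset.mem_univ i, hi⟩)⟩, fun v => ?_⟩
  by_cases hv : v ∈ Finset.univ.image c
  · obtain ⟨i, _, hi⟩ := Finset.mem_image.mp hv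
    exact Or.inr (Or.inr ⟨i, hi.symm⟩)
  · have : v ∈ ({w1, w2} : Finset V) := by
      rw [← hw]; exact Finset.mem_compl.mpr hv
    rcases Finset.mem_insert.mp this with h | h
    · exact Or.inl h
    · exact Or.inr (Or.inl (Finset.mem_singleton.mp h))

lemma compl_three [Fintype V] (hcard : Fintype.card V = 7) (c : ZMod 4 → V)
    (hinj : Function.Injective c) :
    ∃ w1 w2 w3 : V, w1 ≠ w2 ∧ w1 ≠ w3 ∧ w2 ≠ w3 ∧
      (∀ i, c i ≠ w1 ∧ c i ≠ w2 ∧ c i ≠ w3) ∧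
      (∀ v : V, v = w1 ∨ v = w2 ∨ v = w3 ∨ ∃ i, v = c i) := by
  have h := compl_card hcard c hinj (by norm_num)
  obtain ⟨w1, w2, w3, h12, h13, h23, hw⟩ := Finset.card_eq_three.mp h
  have hm : ∀ x ∈ ({w1, w2, w3} : Finset V), x ∉ Finset.univ.image c := by
    intro x hx
    rw [← hw] at hx
    exact Finset.mem_compl.mp hx
  have h1 := hm w1 (by simp)
  have h2 := hm w2 (by simp)
  have h3 := hm w3 (by simp)
  refine ⟨w1, w2, w3, h12, h13, h23, fun i =>
    ⟨fun hi => h1 (Finset.mem_image.mpr ⟨i, Finset.mem_univ i, hi⟩),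
     fun hi => h2 (Finset.mem_image.mpr ⟨i, Finset.mem_univ i, hi⟩),
     fun hi => h3 (Finset.mem_image.mpr ⟨i, Finset.mem_univ i, hi⟩)⟩, fun v => ?_⟩
  by_cases hv : v ∈ Finset.univ.image c
  · obtain ⟨i, _, hi⟩ := Finset.mem_image.mp hv
    exact Or.inr (Or.inr (Or.inr ⟨i, hi.symm⟩))
  · have : v ∈ ({w1, w2, w3} : Finset V) := by
      rw [← hw]; exact Finset.mem_compl.mpr hv
    simp only [Finset.mem_insert, Finset.mem_singleton] at this
    tauto

lemma case7 [Fintype V] (hcard : Fintype.card V = 7)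
    (hirr : ∀ v, ¬ A v v) (h2 : ¬ HasDicycle A 2) (h3 : ¬ HasDicycle A 3)
    (hout : ∀ v, 2 ≤ outDeg A v) (hdc : HasDicycle A 7) :
    ∃ e : V ≃ ZMod 7, ∀ u v : V, A u v ↔ C7 (e u) (e v) := by
  obtain ⟨c, hinj, harc⟩ := hdc
  have hbij : Function.Bijective c :=
    (Fintype.bijective_iff_injective_and_card c).mpr ⟨hinj, by rw [ZMod.card, hcard]⟩
  have NE : ∀ (a b : ZMod 7), a ≠ b → c a ≠ c b := fun a b h => hinj.ne h
  have step : ∀ x y : ZMod 7, x + 1 = y → A (c x) (c y) := by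
    intro x y h; rw [← h]; exact harc x
  -- kill +5 (3-cycle x, x+5, x+6)
  have n5 : ∀ x : ZMod 7, ¬ A (c x) (c (x + 5)) := by
    intro x h
    exact h3 (mk3 (c x) (c (x+5)) (c (x+6))
      (NE _ _ ((by decide : ∀ x : ZMod 7, x ≠ x + 5) x))
      (NE _ _ ((by decide : ∀ x : ZMod 7, x ≠ x + 6) x))
      (NE _ _ ((by decide : ∀ x : ZMod 7, x + 5 ≠ x + 6) x))
      h (step _ _ (by ring)) (step _ _ ((by decide : ∀ x : ZMod 7, x + 6 + 1 = x) x)))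
  -- kill +6 (digon)
  have n6 : ∀ x : ZMod 7, ¬ A (c x) (c (x + 6)) := by
    intro x h
    exact h2 (mk2 (c x) (c (x+6))
      (NE _ _ ((by decide : ∀ x : ZMod 7, x ≠ x + 6) x))
      h (step _ _ ((by decide : ∀ x : ZMod 7, x + 6 + 1 = x) x)))
  -- cover
  have cover : ∀ x : ZMod 7, A (c x) (c (x+2)) ∨ A (c x) (c (x+3)) ∨ A (c x) (c (x+4)) := by
    intro x
    obtain ⟨u, hne1, hu⟩ := exists_out_ne (c x) (c (x+1)) (hout (c x))
    obtain ⟨j, rfl⟩ := hbij.2 u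
    have hj : j = x + (j - x) := by ring
    rw [hj] at hne1 hu
    rcases (by decide : ∀ d : ZMod 7, d = 0 ∨ d = 1 ∨ d = 2 ∨ d = 3 ∨ d = 4 ∨ d = 5 ∨ d = 6) (j - x)
      with h|h|h|h|h|h|h <;> rw [h] at hne1 hu
    · rw [add_zero] at hu; exact absurd hu (hirr _)
    · exact absurd rfl hne1
    · exact Or.inl hu
    · exact Or.inr (Or.inl hu)
    · exact Or.inr (Or.inr hu)
    · exact absurd hu (n5 x)
    · exact absurd hu (n6 x)
  -- no +3 arcs
  have hstep3 : ∀ x : ZMod 7, A (c x) (c (x+3)) →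
      A (c (x+3)) (c (x+5)) ∧ ¬ A (c (x+5)) (c x) ∧ A (c (x+5)) (c (x+5+3)) := by
    intro x hf3
    have hcov := cover (x+3)
    have k1 : ¬ A (c (x+3)) (c (x+3+3)) := by
      intro hh
      refine h3 (mk3 (c x) (c (x+3)) (c (x+3+3))
        (NE _ _ ((by decide : ∀ x : ZMod 7, x ≠ x + 3) x))
        (NE _ _ ((by decide : ∀ x : ZMod 7, x ≠ x + 3 + 3) x))
        (NE _ _ ((by decide : ∀ x : ZMod 7, x + 3 ≠ x + 3 + 3) x))
        hf3 hh (step _ _ ((by decide : ∀ x : ZMod 7, x + 3 + 3 + 1 = x) x)))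
    have k2 : ¬ A (c (x+3)) (c (x+3+4)) := by
      intro hh
      rw [(by decide : ∀ x : ZMod 7, x + 3 + 4 = x) x] at hh
      exact h2 (mk2 (c x) (c (x+3)) (NE _ _ ((by decide : ∀ x : ZMod 7, x ≠ x + 3) x)) hf3 hh)
    have hf23 : A (c (x+3)) (c (x+5)) := by
      rcases hcov with h|h|h
      · rwa [(by decide : ∀ x : ZMod 7, x + 3 + 2 = x + 5) x] at h
      · exact absurd h k1
      · exact absurd h k2
    have k3 : ¬ A (c (x+5)) (c x) := by
      intro hh
      exact h3 (mk3 (c (x+3)) (c (x+5)) (c x)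
        (NE _ _ ((by decide : ∀ x : ZMod 7, x + 3 ≠ x + 5) x))
        (NE _ _ ((by decide : ∀ x : ZMod 7, x + 3 ≠ x) x))
        (NE _ _ ((by decide : ∀ x : ZMod 7, x + 5 ≠ x) x))
        hf23 hh hf3)
    refine ⟨hf23, k3, ?_⟩
    have hcov5 := cover (x+5)
    have k4 : ¬ A (c (x+5)) (c (x+5+4)) := by
      intro hh
      rw [(by decide : ∀ x : ZMod 7, x + 5 + 4 = x + 2) x] at hh
      exact h3 (mk3 (c (x+3)) (c (x+5)) (c (x+2))
        (NE _ _ ((by decide : ∀ x : ZMod 7, x + 3 ≠ x + 5) x))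
        (NE _ _ ((by decide : ∀ x : ZMod 7, x + 3 ≠ x + 2) x))
        (NE _ _ ((by decide : ∀ x : ZMod 7, x + 5 ≠ x + 2) x))
        hf23 hh (step _ _ (by ring)))
    rcases hcov5 with h|h|h
    · rw [(by decide : ∀ x : ZMod 7, x + 5 + 2 = x) x] at h
      exact absurd h k3
    · exact h
    · exact absurd h k4
  have P3 : ∀ x : ZMod 7, ¬ A (c x) (c (x+3)) := by
    intro x hf3
    obtain ⟨hA, _, hB⟩ := hstep3 x hf3
    obtain ⟨_, hC, _⟩ := hstep3 (x+5) hB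
    rw [(by decide : ∀ x : ZMod 7, x + 5 + 5 = x + 3) x] at hC
    exact hC hA
  -- branch on existence of a +4 arc
  by_cases hex : ∃ x : ZMod 7, A (c x) (c (x+4))
  · -- all arcs are +1, +4
    obtain ⟨x0, hx0⟩ := hex
    have step4 : ∀ x : ZMod 7, A (c x) (c (x+4)) → A (c (x+4)) (c (x+4+4)) := by
      intro x hf4
      have k1 : ¬ A (c (x+4)) (c (x+4+2)) := by
        intro hh
        exact h3 (mk3 (c x) (c (x+4)) (c (x+4+2))
          (NE _ _ ((by decide : ∀ x : ZMod 7, x ≠ x + 4) x))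
          (NE _ _ ((by decide : ∀ x : ZMod 7, x ≠ x + 4 + 2) x))
          (NE _ _ ((by decide : ∀ x : ZMod 7, x + 4 ≠ x + 4 + 2) x))
          hf4 hh (step _ _ ((by decide : ∀ x : ZMod 7, x + 4 + 2 + 1 = x) x)))
      rcases cover (x+4) with h|h|h
      · exact absurd h k1
      · exact absurd h (P3 _)
      · exact h
    have all4 : ∀ x : ZMod 7, A (c x) (c (x+4)) := by
      have b1 := step4 x0 hx0
      have b2 := step4 _ b1
      rw [(by decide : ∀ x : ZMod 7, x + 4 + 4 = x + 1) x0] at b2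
      have b3 := step4 _ b2
      rw [(by decide : ∀ x : ZMod 7, x + 1 + 4 = x + 5) x0] at b3
      have b4 := step4 _ b3
      rw [(by decide : ∀ x : ZMod 7, x + 5 + 4 = x + 2) x0] at b4
      have b5 := step4 _ b4
      rw [(by decide : ∀ x : ZMod 7, x + 2 + 4 = x + 6) x0] at b5
      have b6 := step4 _ b5
      rw [(by decide : ∀ x : ZMod 7, x + 6 + 4 = x + 3) x0] at b6
      intro x
      have hx : x = x0 + (x - x0) := by ring
      rcases (by decide : ∀ d : ZMod 7, d = 0 ∨ d = 1 ∨ d = 2 ∨ d = 3 ∨ d = 4 ∨ d = 5 ∨ d = 6) (x - x0)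
        with h|h|h|h|h|h|h <;> rw [h] at hx <;> rw [hx]
      · rw [add_zero]; exact hx0
      · exact b2
      · exact b4
      · exact b6
      · exact b1
      · exact b3
      · exact b5
    have no2 : ∀ x : ZMod 7, ¬ A (c x) (c (x+2)) := by
      intro x hh
      refine h3 (mk3 (c x) (c (x+2)) (c (x+6))
        (NE _ _ ((by decide : ∀ x : ZMod 7, x ≠ x + 2) x))
        (NE _ _ ((by decide : ∀ x : ZMod 7, x ≠ x + 6) x))
        (NE _ _ ((by decide : ∀ x : ZMod 7, x + 2 ≠ x + 6) x))
        hh ?_ (step _ _ ((by decide : ∀ x : ZMod 7, x + 6 + 1 = x) x)))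
      have := all4 (x+2)
      rwa [(by decide : ∀ x : ZMod 7, x + 2 + 4 = x + 6) x] at this
    -- characterization
    have key : ∀ a b : ZMod 7, A (c a) (c b) ↔ (b - a = 1 ∨ b - a = 4) := by
      intro a b
      constructor
      · intro h
        have hb : b = a + (b - a) := by ring
        rcases (by decide : ∀ d : ZMod 7, d = 0 ∨ d = 1 ∨ d = 2 ∨ d = 3 ∨ d = 4 ∨ d = 5 ∨ d = 6) (b - a)
          with hd|hd|hd|hd|hd|hd|hd <;> rw [hd] at hb <;> rw [hb] at h
        · rw [add_zero] at h; exact absurd h (hirr _)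
        · exact Or.inl hd
        · exact absurd h (no2 a)
        · exact absurd h (P3 a)
        · exact Or.inr hd
        · exact absurd h (n5 a)
        · exact absurd h (n6 a)
      · intro h
        have hb : b = a + (b - a) := by ring
        rcases h with hd|hd <;> rw [hd] at hb <;> rw [hb]
        · exact step _ _ rfl
        · exact all4 a
    set E := Equiv.ofBijective c hbij with hE
    refine ⟨E.symm.trans ⟨fun x => 2 * x, fun x => 4 * x, by decide, by decide⟩, ?_⟩
    intro u v
    have hu : u = c (E.symm u) := (E.apply_symm_apply u).symm
    have hv : v = c (E.symm v) := (E.apply_symm_apply v).symm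
    calc A u v ↔ A (c (E.symm u)) (c (E.symm v)) := by rw [← hu, ← hv]
    _ ↔ (E.symm v - E.symm u = 1 ∨ E.symm v - E.symm u = 4) := key _ _
    _ ↔ C7 (2 * E.symm u) (2 * E.symm v) := by
        have := (by decide : ∀ a b : ZMod 7,
          ((b - a = 1 ∨ b - a = 4) ↔ (2*b = 2*a + 1 ∨ 2*b = 2*a + 2))) (E.symm u) (E.symm v)
        exact this
    _ ↔ _ := Iff.rfl
  · -- all arcs are +1, +2
    push_neg at hex
    have all2 : ∀ x : ZMod 7, A (c x) (c (x+2)) := by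
      intro x
      rcases cover x with h|h|h
      · exact h
      · exact absurd h (P3 x)
      · exact absurd h (hex x)
    have key : ∀ a b : ZMod 7, A (c a) (c b) ↔ (b - a = 1 ∨ b - a = 2) := by
      intro a b
      constructor
      · intro h
        have hb : b = a + (b - a) := by ring
        rcases (by decide : ∀ d : ZMod 7, d = 0 ∨ d = 1 ∨ d = 2 ∨ d = 3 ∨ d = 4 ∨ d = 5 ∨ d = 6) (b - a)
          with hd|hd|hd|hd|hd|hd|hd <;> rw [hd] at hb <;> rw [hb] at h
        · rw [add_zero] at h; exact absurd h (hirr _)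
        · exact Or.inl hd
        · exact Or.inr hd
        · exact absurd h (P3 a)
        · exact absurd h (hex a)
        · exact absurd h (n5 a)
        · exact absurd h (n6 a)
      · intro h
        have hb : b = a + (b - a) := by ring
        rcases h with hd|hd <;> rw [hd] at hb <;> rw [hb]
        · exact step _ _ rfl
        · exact all2 a
    set E := Equiv.ofBijective c hbij with hE
    refine ⟨E.symm, ?_⟩
    intro u v
    have hu : u = c (E.symm u) := (E.apply_symm_apply u).symm
    have hv : v = c (E.symm v) := (E.apply_symm_apply v).symm
    calc A u v ↔ A (c (E.symm u)) (c (E.symm v)) := by rw [← hu, ← hv]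
    _ ↔ (E.symm v - E.symm u = 1 ∨ E.symm v - E.symm u = 2) := key _ _
    _ ↔ C7 (E.symm u) (E.symm v) := by
        have := (by decide : ∀ a b : ZMod 7,
          ((b - a = 1 ∨ b - a = 2) ↔ (b = a + 1 ∨ b = a + 2))) (E.symm u) (E.symm v)
        exact this

lemma case6 [Fintype V] (hcard : Fintype.card V = 7)
    (hirr : ∀ v, ¬ A v v) (h2 : ¬ HasDicycle A 2) (h3 : ¬ HasDicycle A 3)
    (hout : ∀ v, 2 ≤ outDeg A v) (hin : ∀ v, 1 ≤ inDeg A v)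
    (hno7 : ¬ HasDicycle A 7) (hdc : HasDicycle A 6) : False := by
  obtain ⟨c0, hinj0, harc0⟩ := hdc
  obtain ⟨w, hwne0, henum0⟩ := compl_one hcard c0 hinj0
  -- the in-neighbour of w
  obtain ⟨u, hu⟩ := exists_in w (hin w)
  have huw : u ≠ w := fun h => hirr w (h ▸ hu)
  obtain ⟨i0, rfl⟩ : ∃ i, u = c0 i := by
    rcases henum0 u with h | h
    · exact absurd h huw
    · exact h
  -- rotate the cycle so that the in-neighbour is c 0
  set c : ZMod 6 → V := fun i => c0 (i + i0) with hc
  have hinj : Function.Injective c := fun a b h => by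
    have := hinj0 h; exact add_right_cancel this
  have harc : ∀ i : ZMod 6, A (c i) (c (i+1)) := by
    intro i
    show A (c0 (i + i0)) (c0 (i + 1 + i0))
    have : i + 1 + i0 = (i + i0) + 1 := by ring
    rw [this]
    exact harc0 _
  have hwne : ∀ i, c i ≠ w := fun i => hwne0 _
  have henum : ∀ v : V, v = w ∨ ∃ i, v = c i := by
    intro v
    rcases henum0 v with h | ⟨j, hj⟩
    · exact Or.inl h
    · exact Or.inr ⟨j - i0, by rw [hj]; show c0 j = c0 (j - i0 + i0); congr 1; ring⟩
  have hI0 : A (c 0) w := by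
    show A (c0 (0 + i0)) w
    rw [zero_add]
    exact hu
  have NE : ∀ (a b : ZMod 6), a ≠ b → c a ≠ c b := fun a b h => hinj.ne h
  have step : ∀ x y : ZMod 6, x + 1 = y → A (c x) (c y) := by
    intro x y h; rw [← h]; exact harc x
  -- out-neighbours of w are among c 2, c 3, c 4
  have hOmem : ∀ j : ZMod 6, A w (c j) → j = 2 ∨ j = 3 ∨ j = 4 := by
    intro j hj
    rcases (by decide : ∀ j : ZMod 6, j = 0 ∨ j = 1 ∨ j = 2 ∨ j = 3 ∨ j = 4 ∨ j = 5) j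
      with rfl|rfl|rfl|rfl|rfl|rfl
    · exact absurd (mk2 (c 0) w (hwne 0) hI0 hj) h2
    · exact absurd (mk7 w (c 1) (c 2) (c 3) (c 4) (c 5) (c 0)
        (Ne.symm (hwne 1)) (Ne.symm (hwne 2)) (Ne.symm (hwne 3)) (Ne.symm (hwne 4))
        (Ne.symm (hwne 5)) (Ne.symm (hwne 0))
        (NE _ _ (by decide)) (NE _ _ (by decide)) (NE _ _ (by decide)) (NE _ _ (by decide))
        (NE _ _ (by decide)) (NE _ _ (by decide)) (NE _ _ (by decide)) (NE _ _ (by decide))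
        (NE _ _ (by decide)) (NE _ _ (by decide)) (NE _ _ (by decide)) (NE _ _ (by decide))
        (NE _ _ (by decide)) (NE _ _ (by decide)) (NE _ _ (by decide))
        hj (step 1 2 (by decide)) (step 2 3 (by decide)) (step 3 4 (by decide))
        (step 4 5 (by decide)) (step 5 0 (by decide)) hI0) hno7
    · exact Or.inl rfl
    · exact Or.inr (Or.inl rfl)
    · exact Or.inr (Or.inr rfl)
    · exact absurd (mk3 w (c 5) (c 0) (Ne.symm (hwne 5)) (Ne.symm (hwne 0)) (NE _ _ (by decide))
        hj (step 5 0 (by decide)) hI0) h3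
  -- w has two distinct out-neighbours, both on the cycle
  obtain ⟨a, b, hab, ha, hb⟩ := exists_two_out w (hout w)
  have haw : a ≠ w := fun h => hirr w (h ▸ ha)
  have hbw : b ≠ w := fun h => hirr w (h ▸ hb)
  obtain ⟨ja, rfl⟩ : ∃ i, a = c i := by
    rcases henum a with h | h
    · exact absurd h haw
    · exact h
  obtain ⟨jb, rfl⟩ : ∃ i, b = c i := by
    rcases henum b with h | h
    · exact absurd h hbw
    · exact h
  have hja := hOmem ja ha
  have hjb := hOmem jb hb
  -- reduce to the three scenarios
  have hS : (A w (c 2) ∧ A w (c 4)) ∨ (A w (c 2) ∧ A w (c 3)) ∨ (A w (c 3) ∧ A w (c 4)) := by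
    rcases hja with rfl|rfl|rfl <;> rcases hjb with rfl|rfl|rfl <;>
      first
      | exact absurd rfl hab
      | exact Or.inl ⟨ha, hb⟩
      | exact Or.inl ⟨hb, ha⟩
      | exact Or.inr (Or.inl ⟨ha, hb⟩)
      | exact Or.inr (Or.inl ⟨hb, ha⟩)
      | exact Or.inr (Or.inr ⟨ha, hb⟩)
      | exact Or.inr (Or.inr ⟨hb, ha⟩)
  -- cover: every cycle vertex has a second out-arc of type +2, +3 or to w
  have cov : ∀ x : ZMod 6, A (c x) (c (x+2)) ∨ A (c x) (c (x+3)) ∨ A (c x) w := by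
    intro x
    obtain ⟨u2, hne1, hu2⟩ := exists_out_ne (c x) (c (x+1)) (hout (c x))
    rcases henum u2 with h | ⟨j, hj⟩
    · rw [h] at hu2; exact Or.inr (Or.inr hu2)
    · rw [hj] at hne1 hu2
      have hjx : j = x + (j - x) := by ring
      rw [hjx] at hne1 hu2
      rcases (by decide : ∀ d : ZMod 6, d = 0 ∨ d = 1 ∨ d = 2 ∨ d = 3 ∨ d = 4 ∨ d = 5) (j - x)
        with h|h|h|h|h|h <;> rw [h] at hne1 hu2
      · rw [add_zero] at hu2; exact absurd hu2 (hirr _)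
      · exact absurd rfl hne1
      · exact Or.inl hu2
      · exact Or.inr (Or.inl hu2)
      · exact absurd (mk3 (c x) (c (x+4)) (c (x+5))
          (NE _ _ ((by decide : ∀ x : ZMod 6, x ≠ x + 4) x))
          (NE _ _ ((by decide : ∀ x : ZMod 6, x ≠ x + 5) x))
          (NE _ _ ((by decide : ∀ x : ZMod 6, x + 4 ≠ x + 5) x))
          hu2 (step _ _ (by ring)) (step _ _ ((by decide : ∀ x : ZMod 6, x + 5 + 1 = x) x))) h3
      · exact absurd (mk2 (c x) (c (x+5))
          (NE _ _ ((by decide : ∀ x : ZMod 6, x ≠ x + 5) x))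
          hu2 (step _ _ ((by decide : ∀ x : ZMod 6, x + 5 + 1 = x) x))) h2
  -- I-constraints: which cycle vertices can point to w, given j ∈ O(w)
  -- kill: A (c i) w with A w (c j) when i - j ∈ {0, 1, 5}
  have killI : ∀ i j : ZMod 6, A (c i) w → A w (c j) → i - j = 0 ∨ i - j = 1 ∨ i - j = 5 → False := by
    intro i j hi hj hd
    have hij : i = j + (i - j) := by ring
    rcases hd with h|h|h <;> rw [h] at hij <;> rw [hij] at hi
    · rw [add_zero] at hi
      exact absurd (mk2 w (c j) (Ne.symm (hwne j)) hj hi) h2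
    · exact absurd (mk3 w (c j) (c (j+1)) (Ne.symm (hwne j)) (Ne.symm (hwne (j+1)))
        (NE _ _ ((by decide : ∀ x : ZMod 6, x ≠ x + 1) j)) hj (step _ _ rfl) hi) h3
    · exact absurd (mk7 w (c j) (c (j+1)) (c (j+2)) (c (j+3)) (c (j+4)) (c (j+5))
        (Ne.symm (hwne j)) (Ne.symm (hwne (j+1))) (Ne.symm (hwne (j+2))) (Ne.symm (hwne (j+3)))
        (Ne.symm (hwne (j+4))) (Ne.symm (hwne (j+5)))
        (NE _ _ ((by decide : ∀ x : ZMod 6, x ≠ x + 1) j))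
        (NE _ _ ((by decide : ∀ x : ZMod 6, x ≠ x + 2) j))
        (NE _ _ ((by decide : ∀ x : ZMod 6, x ≠ x + 3) j))
        (NE _ _ ((by decide : ∀ x : ZMod 6, x ≠ x + 4) j))
        (NE _ _ ((by decide : ∀ x : ZMod 6, x ≠ x + 5) j))
        (NE _ _ ((by decide : ∀ x : ZMod 6, x + 1 ≠ x + 2) j))
        (NE _ _ ((by decide : ∀ x : ZMod 6, x + 1 ≠ x + 3) j))
        (NE _ _ ((by decide : ∀ x : ZMod 6, x + 1 ≠ x + 4) j))
        (NE _ _ ((by decide : ∀ x : ZMod 6, x + 1 ≠ x + 5) j))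
        (NE _ _ ((by decide : ∀ x : ZMod 6, x + 2 ≠ x + 3) j))
        (NE _ _ ((by decide : ∀ x : ZMod 6, x + 2 ≠ x + 4) j))
        (NE _ _ ((by decide : ∀ x : ZMod 6, x + 2 ≠ x + 5) j))
        (NE _ _ ((by decide : ∀ x : ZMod 6, x + 3 ≠ x + 4) j))
        (NE _ _ ((by decide : ∀ x : ZMod 6, x + 3 ≠ x + 5) j))
        (NE _ _ ((by decide : ∀ x : ZMod 6, x + 4 ≠ x + 5) j))
        hj (step _ _ rfl) (step _ _ (by ring)) (step _ _ (by ring)) (step _ _ (by ring))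
        (step _ _ (by ring)) hi) hno7
  -- 3-cycle through w with a chord
  have killC : ∀ j k : ZMod 6, A w (c j) → A (c j) (c k) → A (c k) w → j ≠ k → False := by
    intro j k hj hjk hk hne
    exact absurd (mk3 w (c j) (c k) (Ne.symm (hwne j)) (Ne.symm (hwne k)) (NE _ _ hne)
      hj hjk hk) h3
  -- scenario analysis
  rcases hS with ⟨hO2, hO4⟩ | ⟨hO2, hO3⟩ | ⟨hO3, hO4⟩
  · -- O ⊇ {2,4}
    have nI1 : ¬ A (c 1) w := fun h => killI 1 2 h hO2 (by right; right; decide)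
    have nI4 : ¬ A (c 4) w := fun h => killI 4 4 h hO4 (by left; decide)
    have nc24_0 : ¬ A (c 4) (c 0) := fun h => killC 4 0 hO4 h hI0 (by decide)
    have hc34 : A (c 4) (c 1) := by
      rcases cov 4 with h|h|h
      · exact absurd (by rwa [(by decide : (4+2 : ZMod 6) = 0)] at h) nc24_0
      · rwa [(by decide : (4+3 : ZMod 6) = 1)] at h
      · exact absurd h nI4
    have nc31 : ¬ A (c 1) (c 4) := fun h =>
      absurd (mk2 (c 4) (c 1) (NE _ _ (by decide)) hc34 h) h2
    have nc21 : ¬ A (c 1) (c 3) := fun h =>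
      absurd (mk3 (c 4) (c 1) (c 3) (NE _ _ (by decide)) (NE _ _ (by decide)) (NE _ _ (by decide))
        hc34 h (step 3 4 (by decide))) h3
    rcases cov 1 with h|h|h
    · exact nc21 (by rwa [(by decide : (1+2 : ZMod 6) = 3)] at h)
    · exact nc31 (by rwa [(by decide : (1+3 : ZMod 6) = 4)] at h)
    · exact nI1 h
  · -- O ⊇ {2,3}
    have nI1 : ¬ A (c 1) w := fun h => killI 1 2 h hO2 (by right; right; decide)
    have nI3 : ¬ A (c 3) w := fun h => killI 3 2 h hO2 (by right; left; decide)
    have nc33 : ¬ A (c 3) (c 0) := fun h => killC 3 0 hO3 h hI0 (by decide)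
    have hc23 : A (c 3) (c 5) := by
      rcases cov 3 with h|h|h
      · rwa [(by decide : (3+2 : ZMod 6) = 5)] at h
      · exact absurd (by rwa [(by decide : (3+3 : ZMod 6) = 0)] at h) nc33
      · exact absurd h nI3
    have nI5 : ¬ A (c 5) w := fun h => killC 3 5 hO3 hc23 h (by decide)
    have nc35 : ¬ A (c 5) (c 2) := fun h =>
      absurd (mk3 (c 3) (c 5) (c 2) (NE _ _ (by decide)) (NE _ _ (by decide)) (NE _ _ (by decide))
        hc23 h (step 2 3 (by decide))) h3
    have hc25 : A (c 5) (c 1) := by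
      rcases cov 5 with h|h|h
      · rwa [(by decide : (5+2 : ZMod 6) = 1)] at h
      · exact absurd (by rwa [(by decide : (5+3 : ZMod 6) = 2)] at h) nc35
      · exact absurd h nI5
    have nc31 : ¬ A (c 1) (c 4) := fun h =>
      absurd (mk3 (c 5) (c 1) (c 4) (NE _ _ (by decide)) (NE _ _ (by decide)) (NE _ _ (by decide))
        hc25 h (step 4 5 (by decide))) h3
    have hc21 : A (c 1) (c 3) := by
      rcases cov 1 with h|h|h
      · rwa [(by decide : (1+2 : ZMod 6) = 3)] at h
      · exact absurd (by rwa [(by decide : (1+3 : ZMod 6) = 4)] at h) nc31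
      · exact absurd h nI1
    exact absurd (mk3 (c 1) (c 3) (c 5) (NE _ _ (by decide)) (NE _ _ (by decide))
      (NE _ _ (by decide)) hc21 hc23 hc25) h3
  · -- O ⊇ {3,4}
    have nI4 : ¬ A (c 4) w := fun h => killI 4 3 h hO3 (by right; left; decide)
    have nc24_0 : ¬ A (c 4) (c 0) := fun h => killC 4 0 hO4 h hI0 (by decide)
    have hc34 : A (c 4) (c 1) := by
      rcases cov 4 with h|h|h
      · exact absurd (by rwa [(by decide : (4+2 : ZMod 6) = 0)] at h) nc24_0
      · rwa [(by decide : (4+3 : ZMod 6) = 1)] at h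
      · exact absurd h nI4
    have nI1 : ¬ A (c 1) w := fun h => killC 4 1 hO4 hc34 h (by decide)
    have nc31 : ¬ A (c 1) (c 4) := fun h =>
      absurd (mk2 (c 4) (c 1) (NE _ _ (by decide)) hc34 h) h2
    have nc21 : ¬ A (c 1) (c 3) := fun h =>
      absurd (mk3 (c 4) (c 1) (c 3) (NE _ _ (by decide)) (NE _ _ (by decide)) (NE _ _ (by decide))
        hc34 h (step 3 4 (by decide))) h3
    rcases cov 1 with h|h|h
    · exact nc21 (by rwa [(by decide : (1+2 : ZMod 6) = 3)] at h)
    · exact nc31 (by rwa [(by decide : (1+3 : ZMod 6) = 4)] at h)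
    · exact nI1 h

lemma case5core [Fintype V]
    (hirr : ∀ v, ¬ A v v) (h2 : ¬ HasDicycle A 2) (h3 : ¬ HasDicycle A 3)
    (hout : ∀ v, 2 ≤ outDeg A v)
    (hno6 : ¬ HasDicycle A 6) (hno7 : ¬ HasDicycle A 7)
    (c : ZMod 5 → V) (w w' : V)
    (hinj : Function.Injective c) (harc : ∀ i, A (c i) (c (i+1)))
    (hww' : w ≠ w') (hcw : ∀ i, c i ≠ w) (hcw' : ∀ i, c i ≠ w')
    (henum : ∀ v : V, v = w ∨ v = w' ∨ ∃ i, v = c i)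
    (p q : ZMod 5) (hpq : p ≠ q) (hp : A (c p) w) (hq : A (c q) w) : False := by
  -- rotate so that p = 0
  have hrot : ∀ (c1 : ZMod 5 → V) (k : ZMod 5), Function.Injective c1 →
      (∀ i, A (c1 i) (c1 (i+1))) → Function.Injective (fun i => c1 (i + k)) ∧
      (∀ i, A ((fun i => c1 (i + k)) i) ((fun i => c1 (i + k)) (i+1))) := by
    intro c1 k h1 h1arc
    constructor
    · intro a b h; exact add_right_cancel (h1 h)
    · intro i
      show A (c1 (i + k)) (c1 (i + 1 + k))
      have : i + 1 + k = (i + k) + 1 := by ring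
      rw [this]
      exact h1arc _
  obtain ⟨hinj', harc'⟩ := hrot c p hinj harc
  set b : ZMod 5 → V := fun i => c (i + p) with hb
  have hbw : ∀ i, b i ≠ w := fun i => hcw _
  have hbw' : ∀ i, b i ≠ w' := fun i => hcw' _
  have hbenum : ∀ v : V, v = w ∨ v = w' ∨ ∃ i, v = b i := by
    intro v
    rcases henum v with h | h | ⟨j, hj⟩
    · exact Or.inl h
    · exact Or.inr (Or.inl h)
    · refine Or.inr (Or.inr ⟨j - p, ?_⟩)
      rw [hj]; show c j = c (j - p + p); congr 1; ring
  have hp0 : A (b 0) w := by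
    show A (c (0 + p)) w; rw [zero_add]; exact hp
  set d : ZMod 5 := q - p with hd
  have hpd : A (b d) w := by
    show A (c (q - p + p)) w
    have : q - p + p = q := by ring
    rw [this]; exact hq
  have hd0 : d ≠ 0 := fun h => hpq (by
    have : q - p = 0 := h
    have := sub_eq_zero.mp this
    exact this.symm)
  clear_value b
  clear hp hq hinj harc hcw hcw' henum
  have NE : ∀ (x y : ZMod 5), x ≠ y → b x ≠ b y := fun x y h => hinj'.ne h
  have step : ∀ x y : ZMod 5, x + 1 = y → A (b x) (b y) := by
    intro x y h; rw [← h]; exact harc' x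
  -- kill: A (b i) w together with A w (b j) for i - j ∈ {0,1,4}
  have killIO : ∀ i j : ZMod 5, A (b i) w → A w (b j) →
      i - j = 0 ∨ i - j = 1 ∨ i - j = 4 → False := by
    intro i j hi hj hdiff
    have hij : i = j + (i - j) := by ring
    rcases hdiff with h|h|h <;> rw [h] at hij <;> rw [hij] at hi
    · rw [add_zero] at hi
      exact absurd (mk2 w (b j) (Ne.symm (hbw j)) hj hi) h2
    · exact absurd (mk3 w (b j) (b (j+1)) (Ne.symm (hbw j)) (Ne.symm (hbw (j+1)))
        (NE _ _ ((by decide : ∀ x : ZMod 5, x ≠ x + 1) j)) hj (step _ _ rfl) hi) h3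
    · exact absurd (mk6 w (b j) (b (j+1)) (b (j+2)) (b (j+3)) (b (j+4))
        (Ne.symm (hbw j)) (Ne.symm (hbw (j+1))) (Ne.symm (hbw (j+2))) (Ne.symm (hbw (j+3)))
        (Ne.symm (hbw (j+4)))
        (NE _ _ ((by decide : ∀ x : ZMod 5, x ≠ x + 1) j))
        (NE _ _ ((by decide : ∀ x : ZMod 5, x ≠ x + 2) j))
        (NE _ _ ((by decide : ∀ x : ZMod 5, x ≠ x + 3) j))
        (NE _ _ ((by decide : ∀ x : ZMod 5, x ≠ x + 4) j))
        (NE _ _ ((by decide : ∀ x : ZMod 5, x + 1 ≠ x + 2) j))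
        (NE _ _ ((by decide : ∀ x : ZMod 5, x + 1 ≠ x + 3) j))
        (NE _ _ ((by decide : ∀ x : ZMod 5, x + 1 ≠ x + 4) j))
        (NE _ _ ((by decide : ∀ x : ZMod 5, x + 2 ≠ x + 3) j))
        (NE _ _ ((by decide : ∀ x : ZMod 5, x + 2 ≠ x + 4) j))
        (NE _ _ ((by decide : ∀ x : ZMod 5, x + 3 ≠ x + 4) j))
        hj (step _ _ rfl) (step _ _ (by ring)) (step _ _ (by ring)) (step _ _ (by ring)) hi) hno6
  -- kill with W-path of length 2 : A (b i) w, A w w', A w' (b j), i - j ∈ {0,3,4}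
  have killIO' : ∀ i j : ZMod 5, A (b i) w → A w w' → A w' (b j) →
      i - j = 0 ∨ i - j = 3 ∨ i - j = 4 → False := by
    intro i j hi hw2 hj hdiff
    have hij : i = j + (i - j) := by ring
    rcases hdiff with h|h|h <;> rw [h] at hij <;> rw [hij] at hi
    · rw [add_zero] at hi
      exact absurd (mk3 (b j) w w' (hbw j) (hbw' j) hww' hi hw2 hj) h3
    · exact absurd (mk6 w w' (b j) (b (j+1)) (b (j+2)) (b (j+3))
        hww' (Ne.symm (hbw j)) (Ne.symm (hbw (j+1))) (Ne.symm (hbw (j+2))) (Ne.symm (hbw (j+3)))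
        (Ne.symm (hbw' j)) (Ne.symm (hbw' (j+1))) (Ne.symm (hbw' (j+2))) (Ne.symm (hbw' (j+3)))
        (NE _ _ ((by decide : ∀ x : ZMod 5, x ≠ x + 1) j))
        (NE _ _ ((by decide : ∀ x : ZMod 5, x ≠ x + 2) j))
        (NE _ _ ((by decide : ∀ x : ZMod 5, x ≠ x + 3) j))
        (NE _ _ ((by decide : ∀ x : ZMod 5, x + 1 ≠ x + 2) j))
        (NE _ _ ((by decide : ∀ x : ZMod 5, x + 1 ≠ x + 3) j))
        (NE _ _ ((by decide : ∀ x : ZMod 5, x + 2 ≠ x + 3) j))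
        hw2 hj (step _ _ rfl) (step _ _ (by ring)) (step _ _ (by ring)) hi) hno6
    · exact absurd (mk7 w w' (b j) (b (j+1)) (b (j+2)) (b (j+3)) (b (j+4))
        hww' (Ne.symm (hbw j)) (Ne.symm (hbw (j+1))) (Ne.symm (hbw (j+2))) (Ne.symm (hbw (j+3)))
        (Ne.symm (hbw (j+4)))
        (Ne.symm (hbw' j)) (Ne.symm (hbw' (j+1))) (Ne.symm (hbw' (j+2))) (Ne.symm (hbw' (j+3)))
        (Ne.symm (hbw' (j+4)))
        (NE _ _ ((by decide : ∀ x : ZMod 5, x ≠ x + 1) j))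
        (NE _ _ ((by decide : ∀ x : ZMod 5, x ≠ x + 2) j))
        (NE _ _ ((by decide : ∀ x : ZMod 5, x ≠ x + 3) j))
        (NE _ _ ((by decide : ∀ x : ZMod 5, x ≠ x + 4) j))
        (NE _ _ ((by decide : ∀ x : ZMod 5, x + 1 ≠ x + 2) j))
        (NE _ _ ((by decide : ∀ x : ZMod 5, x + 1 ≠ x + 3) j))
        (NE _ _ ((by decide : ∀ x : ZMod 5, x + 1 ≠ x + 4) j))
        (NE _ _ ((by decide : ∀ x : ZMod 5, x + 2 ≠ x + 3) j))
        (NE _ _ ((by decide : ∀ x : ZMod 5, x + 2 ≠ x + 4) j))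
        (NE _ _ ((by decide : ∀ x : ZMod 5, x + 3 ≠ x + 4) j))
        hw2 hj (step _ _ rfl) (step _ _ (by ring)) (step _ _ (by ring)) (step _ _ (by ring)) hi)
        hno7
  -- classify out-neighbours of w
  obtain ⟨a1, a2, ha12, ha1, ha2⟩ := exists_two_out w (hout w)
  have hclass : ∀ u : V, A w u → u = w' ∨ ∃ j, u = b j := by
    intro u hu
    rcases hbenum u with h | h | h
    · rw [h] at hu; exact absurd hu (hirr w)
    · exact Or.inl h
    · exact Or.inr h
  rcases (by decide : ∀ d : ZMod 5, d = 0 ∨ d = 1 ∨ d = 2 ∨ d = 3 ∨ d = 4) d with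
    hdv|hdv|hdv|hdv|hdv
  · exact hd0 hdv
  all_goals rw [hdv] at hpd
  -- d = 1
  · have hOj : ∀ j, A w (b j) → j = 3 := by
      intro j hj
      rcases (by decide : ∀ j : ZMod 5, j = 0 ∨ j = 1 ∨ j = 2 ∨ j = 3 ∨ j = 4) j with
        rfl|rfl|rfl|rfl|rfl
      · exact absurd (killIO 0 0 hp0 hj (by left; decide)) id
      · exact absurd (killIO 1 1 hpd hj (by left; decide)) id
      · exact absurd (killIO 1 2 hpd hj (by right; right; decide)) id
      · rfl
      · exact absurd (killIO 0 4 hp0 hj (by right; left; decide)) id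
    -- one of the two out-neighbours is w', giving A w w'
    have hww'arc : A w w' := by
      rcases hclass a1 ha1 with h1 | ⟨j1, hj1⟩
      · rw [← h1]; exact ha1
      · rcases hclass a2 ha2 with h2 | ⟨j2, hj2⟩
        · rw [← h2]; exact ha2
        · rw [hj1] at ha1; rw [hj2] at ha2
          have e1 := hOj j1 ha1
          have e2 := hOj j2 ha2
          rw [hj1, hj2, e1, e2] at ha12
          exact absurd rfl ha12
    -- out-neighbours of w' are on the cycle and must equal b 4
    obtain ⟨a3, a4, ha34, ha3, ha4⟩ := exists_two_out w' (hout w')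
    have hOj' : ∀ u : V, A w' u → u = b 4 := by
      intro u hu
      rcases hbenum u with h | h | ⟨j, hj⟩
      · rw [h] at hu
        exact absurd (mk2 w w' hww' hww'arc hu) h2
      · rw [h] at hu; exact absurd hu (hirr w')
      · rw [hj] at hu
        rcases (by decide : ∀ j : ZMod 5, j = 0 ∨ j = 1 ∨ j = 2 ∨ j = 3 ∨ j = 4) j with
          rfl|rfl|rfl|rfl|rfl
        · exact absurd (killIO' 0 0 hp0 hww'arc hu (by left; decide)) id
        · exact absurd (killIO' 0 1 hp0 hww'arc hu (by right; right; decide)) id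
        · exact absurd (killIO' 0 2 hp0 hww'arc hu (by right; left; decide)) id
        · exact absurd (killIO' 1 3 hpd hww'arc hu (by right; left; decide)) id
        · exact hj
    have := (hOj' a3 ha3).trans (hOj' a4 ha4).symm
    exact ha34 this
  -- d = 2 : no out-arc from w to the cycle at all, and w' alone is not enough
  · have hOj : ∀ j, A w (b j) → False := by
      intro j hj
      rcases (by decide : ∀ j : ZMod 5, j = 0 ∨ j = 1 ∨ j = 2 ∨ j = 3 ∨ j = 4) j with
        rfl|rfl|rfl|rfl|rfl
      · exact killIO 0 0 hp0 hj (by left; decide)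
      · exact killIO 0 1 hp0 hj (by right; right; decide)
      · exact killIO 2 2 hpd hj (by left; decide)
      · exact killIO 2 3 hpd hj (by right; right; decide)
      · exact killIO 0 4 hp0 hj (by right; left; decide)
    rcases hclass a1 ha1 with h1 | ⟨j1, hj1⟩
    · rcases hclass a2 ha2 with h2 | ⟨j2, hj2⟩
      · exact ha12 (h1.trans h2.symm)
      · exact hOj j2 (hj2 ▸ ha2)
    · exact hOj j1 (hj1 ▸ ha1)
  -- d = 3
  · have hOj : ∀ j, A w (b j) → False := by
      intro j hj
      rcases (by decide : ∀ j : ZMod 5, j = 0 ∨ j = 1 ∨ j = 2 ∨ j = 3 ∨ j = 4) j with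
        rfl|rfl|rfl|rfl|rfl
      · exact killIO 0 0 hp0 hj (by left; decide)
      · exact killIO 0 1 hp0 hj (by right; right; decide)
      · exact killIO 3 2 hpd hj (by right; left; decide)
      · exact killIO 3 3 hpd hj (by left; decide)
      · exact killIO 0 4 hp0 hj (by right; left; decide)
    rcases hclass a1 ha1 with h1 | ⟨j1, hj1⟩
    · rcases hclass a2 ha2 with h2 | ⟨j2, hj2⟩
      · exact ha12 (h1.trans h2.symm)
      · exact hOj j2 (hj2 ▸ ha2)
    · exact hOj j1 (hj1 ▸ ha1)
  -- d = 4
  · have hOj : ∀ j, A w (b j) → j = 2 := by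
      intro j hj
      rcases (by decide : ∀ j : ZMod 5, j = 0 ∨ j = 1 ∨ j = 2 ∨ j = 3 ∨ j = 4) j with
        rfl|rfl|rfl|rfl|rfl
      · exact absurd (killIO 0 0 hp0 hj (by left; decide)) id
      · exact absurd (killIO 0 1 hp0 hj (by right; right; decide)) id
      · rfl
      · exact absurd (killIO 4 3 hpd hj (by right; left; decide)) id
      · exact absurd (killIO 4 4 hpd hj (by left; decide)) id
    have hww'arc : A w w' := by
      rcases hclass a1 ha1 with h1 | ⟨j1, hj1⟩
      · rw [← h1]; exact ha1
      · rcases hclass a2 ha2 with h2 | ⟨j2, hj2⟩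
        · rw [← h2]; exact ha2
        · rw [hj1] at ha1; rw [hj2] at ha2
          have e1 := hOj j1 ha1
          have e2 := hOj j2 ha2
          rw [hj1, hj2, e1, e2] at ha12
          exact absurd rfl ha12
    obtain ⟨a3, a4, ha34, ha3, ha4⟩ := exists_two_out w' (hout w')
    have hOj' : ∀ u : V, A w' u → u = b 3 := by
      intro u hu
      rcases hbenum u with h | h | ⟨j, hj⟩
      · rw [h] at hu
        exact absurd (mk2 w w' hww' hww'arc hu) h2
      · rw [h] at hu; exact absurd hu (hirr w')
      · rw [hj] at hu
        rcases (by decide : ∀ j : ZMod 5, j = 0 ∨ j = 1 ∨ j = 2 ∨ j = 3 ∨ j = 4) j with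
          rfl|rfl|rfl|rfl|rfl
        · exact absurd (killIO' 0 0 hp0 hww'arc hu (by left; decide)) id
        · exact absurd (killIO' 0 1 hp0 hww'arc hu (by right; right; decide)) id
        · exact absurd (killIO' 0 2 hp0 hww'arc hu (by right; left; decide)) id
        · exact hj
        · exact absurd (killIO' 4 4 hpd hww'arc hu (by left; decide)) id
    have := (hOj' a3 ha3).trans (hOj' a4 ha4).symm
    exact ha34 this


lemma case5 [Fintype V] (hcard : Fintype.card V = 7)
    (hirr : ∀ v, ¬ A v v) (h2 : ¬ HasDicycle A 2) (h3 : ¬ HasDicycle A 3)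
    (hout : ∀ v, 2 ≤ outDeg A v)
    (hno6 : ¬ HasDicycle A 6) (hno7 : ¬ HasDicycle A 7)
    (hdc : HasDicycle A 5) : False := by
  obtain ⟨c, hinj, harc⟩ := hdc
  obtain ⟨w1, w2, hw12, hcne, henum⟩ := compl_two hcard c hinj
  have NE : ∀ (x y : ZMod 5), x ≠ y → c x ≠ c y := fun x y h => hinj.ne h
  have step : ∀ x y : ZMod 5, x + 1 = y → A (c x) (c y) := by
    intro x y h; rw [← h]; exact harc x
  -- cover
  have cov : ∀ x : ZMod 5, A (c x) (c (x+2)) ∨ A (c x) w1 ∨ A (c x) w2 := by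
    intro x
    obtain ⟨u2, hneu, hu2⟩ := exists_out_ne (c x) (c (x+1)) (hout (c x))
    rcases henum u2 with h | h | ⟨j, hj⟩
    · rw [h] at hu2; exact Or.inr (Or.inl hu2)
    · rw [h] at hu2; exact Or.inr (Or.inr hu2)
    · rw [hj] at hneu hu2
      have hjx : j = x + (j - x) := by ring
      rw [hjx] at hneu hu2
      rcases (by decide : ∀ d : ZMod 5, d = 0 ∨ d = 1 ∨ d = 2 ∨ d = 3 ∨ d = 4) (j - x)
        with h|h|h|h|h <;> rw [h] at hneu hu2
      · rw [add_zero] at hu2; exact absurd hu2 (hirr _)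
      · exact absurd rfl hneu
      · exact Or.inl hu2
      · exact absurd (mk3 (c x) (c (x+3)) (c (x+4))
          (NE _ _ ((by decide : ∀ x : ZMod 5, x ≠ x + 3) x))
          (NE _ _ ((by decide : ∀ x : ZMod 5, x ≠ x + 4) x))
          (NE _ _ ((by decide : ∀ x : ZMod 5, x + 3 ≠ x + 4) x))
          hu2 (step _ _ (by ring)) (step _ _ ((by decide : ∀ x : ZMod 5, x + 4 + 1 = x) x))) h3
      · exact absurd (mk2 (c x) (c (x+4))
          (NE _ _ ((by decide : ∀ x : ZMod 5, x ≠ x + 4) x))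
          hu2 (step _ _ ((by decide : ∀ x : ZMod 5, x + 4 + 1 = x) x))) h2
  -- chord interaction facts
  have PPa : ∀ x : ZMod 5, A (c x) (c (x+2)) → ¬ A (c (x+2)) (c (x+2+2)) := by
    intro x hx hy
    rw [(by decide : ∀ x : ZMod 5, x + 2 + 2 = x + 4) 
        ] at hy
    exact absurd (mk3 (c x) (c (x+2)) (c (x+4))
      (NE _ _ ((by decide : ∀ x : ZMod 5, x ≠ x + 2) x))
      (NE _ _ ((by decide : ∀ x : ZMod 5, x ≠ x + 4) x))
      (NE _ _ ((by decide : ∀ x : ZMod 5, x + 2 ≠ x + 4) x))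
      hx hy (step _ _ ((by decide : ∀ x : ZMod 5, x + 4 + 1 = x) x))) h3
  have PPb : ∀ x : ZMod 5, A (c x) (c (x+2)) → ¬ A (c (x+3)) (c (x+3+2)) := by
    intro x hx hy
    rw [(by decide : ∀ x : ZMod 5, x + 3 + 2 = x) x] at hy
    exact absurd (mk3 (c x) (c (x+2)) (c (x+3))
      (NE _ _ ((by decide : ∀ x : ZMod 5, x ≠ x + 2) x))
      (NE _ _ ((by decide : ∀ x : ZMod 5, x ≠ x + 3) x))
      (NE _ _ ((by decide : ∀ x : ZMod 5, x + 2 ≠ x + 3) x))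
      hx (step _ _ (by ring)) hy) h3
  -- three distinct chordless vertices
  obtain ⟨x1, x2, x3, h12, h13, h23, hn1, hn2, hn3⟩ :
      ∃ x1 x2 x3 : ZMod 5, x1 ≠ x2 ∧ x1 ≠ x3 ∧ x2 ≠ x3 ∧
        ¬ A (c x1) (c (x1+2)) ∧ ¬ A (c x2) (c (x2+2)) ∧ ¬ A (c x3) (c (x3+2)) := by
    by_cases hPe : ∃ a : ZMod 5, A (c a) (c (a+2))
    · obtain ⟨a, ha⟩ := hPe
      by_cases hP1 : A (c (a+1)) (c (a+1+2))
      · refine ⟨a+2, a+3, a+4,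
          (by intro h; exact ((by decide : ∀ a : ZMod 5, a + 2 ≠ a + 3) a) h),
          (by intro h; exact ((by decide : ∀ a : ZMod 5, a + 2 ≠ a + 4) a) h),
          (by intro h; exact ((by decide : ∀ a : ZMod 5, a + 3 ≠ a + 4) a) h),
          PPa a ha, PPb a ha, ?_⟩
        have := PPb (a+1) hP1
        rwa [(by decide : ∀ a : ZMod 5, a + 1 + 3 = a + 4) a] at this
      · refine ⟨a+1, a+2, a+3,
          (by intro h; exact ((by decide : ∀ a : ZMod 5, a + 1 ≠ a + 2) a) h),
          (by intro h; exact ((by decide : ∀ a : ZMod 5, a + 1 ≠ a + 3) a) h),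
          (by intro h; exact ((by decide : ∀ a : ZMod 5, a + 2 ≠ a + 3) a) h),
          hP1, PPa a ha, PPb a ha⟩
    · push_neg at hPe
      exact ⟨0, 1, 2, by decide, by decide, by decide, hPe 0, hPe 1, hPe 2⟩
  have W1 : A (c x1) w1 ∨ A (c x1) w2 := by
    rcases cov x1 with h|h|h
    · exact absurd h hn1
    · exact Or.inl h
    · exact Or.inr h
  have W2 : A (c x2) w1 ∨ A (c x2) w2 := by
    rcases cov x2 with h|h|h
    · exact absurd h hn2
    · exact Or.inl h
    · exact Or.inr h
  have W3 : A (c x3) w1 ∨ A (c x3) w2 := by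
    rcases cov x3 with h|h|h
    · exact absurd h hn3
    · exact Or.inl h
    · exact Or.inr h
  -- pigeonhole: two of the three point to the same w
  have hpick : (∃ p q, p ≠ q ∧ A (c p) w1 ∧ A (c q) w1) ∨
      (∃ p q, p ≠ q ∧ A (c p) w2 ∧ A (c q) w2) := by
    rcases W1 with h1|h1 <;> rcases W2 with h2|h2 <;> rcases W3 with h3|h3
    · exact Or.inl ⟨x1, x2, h12, h1, h2⟩
    · exact Or.inl ⟨x1, x2, h12, h1, h2⟩
    · exact Or.inl ⟨x1, x3, h13, h1, h3⟩
    · exact Or.inr ⟨x2, x3, h23, h2, h3⟩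
    · exact Or.inl ⟨x2, x3, h23, h2, h3⟩
    · exact Or.inr ⟨x1, x3, h13, h1, h3⟩
    · exact Or.inr ⟨x1, x2, h12, h1, h2⟩
    · exact Or.inr ⟨x1, x2, h12, h1, h2⟩
  rcases hpick with ⟨p, q, hpq, hp, hq⟩ | ⟨p, q, hpq, hp, hq⟩
  · exact case5core hirr h2 h3 hout hno6 hno7 c w1 w2 hinj harc hw12
      (fun i => (hcne i).1) (fun i => (hcne i).2) henum p q hpq hp hq
  · exact case5core hirr h2 h3 hout hno6 hno7 c w2 w1 hinj harc (Ne.symm hw12)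
      (fun i => (hcne i).2) (fun i => (hcne i).1)
      (fun v => by rcases henum v with h|h|h
                   · exact Or.inr (Or.inl h)
                   · exact Or.inl h
                   · exact Or.inr (Or.inr h)) p q hpq hp hq

lemma case4core [Fintype V]
    (hirr : ∀ v, ¬ A v v) (h2 : ¬ HasDicycle A 2) (h3 : ¬ HasDicycle A 3)
    (hout : ∀ v, 2 ≤ outDeg A v)
    (hno5 : ¬ HasDicycle A 5) (hno6 : ¬ HasDicycle A 6)
    (c : ZMod 4 → V) (w wa wb : V)
    (hinj : Function.Injective c) (harc : ∀ i, A (c i) (c (i+1)))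
    (hwa : w ≠ wa) (hwb : w ≠ wb) (hab : wa ≠ wb)
    (hcw : ∀ i, c i ≠ w) (hcwa : ∀ i, c i ≠ wa) (hcwb : ∀ i, c i ≠ wb)
    (henum : ∀ v : V, v = w ∨ v = wa ∨ v = wb ∨ ∃ i, v = c i)
    (p q : ZMod 4) (hpq : p ≠ q) (hp : A (c p) w) (hq : A (c q) w) : False := by
  -- rotate so that p = 0
  set b : ZMod 4 → V := fun i => c (i + p) with hbdef
  have hinj' : Function.Injective b := fun x y h => add_right_cancel (hinj h)
  have harc' : ∀ i, A (b i) (b (i+1)) := by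
    intro i
    show A (c (i + p)) (c (i + 1 + p))
    have : i + 1 + p = (i + p) + 1 := by ring
    rw [this]
    exact harc _
  have hbw : ∀ i, b i ≠ w := fun i => hcw _
  have hbwa : ∀ i, b i ≠ wa := fun i => hcwa _
  have hbwb : ∀ i, b i ≠ wb := fun i => hcwb _
  have hbenum : ∀ v : V, v = w ∨ v = wa ∨ v = wb ∨ ∃ i, v = b i := by
    intro v
    rcases henum v with h | h | h | ⟨j, hj⟩
    · exact Or.inl h
    · exact Or.inr (Or.inl h)
    · exact Or.inr (Or.inr (Or.inl h))
    · refine Or.inr (Or.inr (Or.inr ⟨j - p, ?_⟩))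
      rw [hj]; show c j = c (j - p + p); congr 1; ring
  have hp0 : A (b 0) w := by
    show A (c (0 + p)) w; rw [zero_add]; exact hp
  set d : ZMod 4 := q - p with hd
  have hpd : A (b d) w := by
    show A (c (q - p + p)) w
    have : q - p + p = q := by ring
    rw [this]; exact hq
  have hd0 : d ≠ 0 := fun h => hpq (sub_eq_zero.mp h).symm
  clear_value b d
  clear hp hq hinj harc hcw hcwa hcwb henum
  have NE : ∀ (x y : ZMod 4), x ≠ y → b x ≠ b y := fun x y h => hinj'.ne h
  have step : ∀ x y : ZMod 4, x + 1 = y → A (b x) (b y) := by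
    intro x y h; rw [← h]; exact harc' x
  have killIO : ∀ i j : ZMod 4, A (b i) w → A w (b j) →
      i - j = 0 ∨ i - j = 1 ∨ i - j = 3 → False := by
    intro i j hi hj hdiff
    have hij : i = j + (i - j) := by ring
    rcases hdiff with h|h|h <;> rw [h] at hij <;> rw [hij] at hi
    · rw [add_zero] at hi
      exact absurd (mk2 w (b j) (Ne.symm (hbw j)) hj hi) h2
    · exact absurd (mk3 w (b j) (b (j+1)) (Ne.symm (hbw j)) (Ne.symm (hbw (j+1)))
        (NE _ _ ((by decide : ∀ x : ZMod 4, x ≠ x + 1) j)) hj (step _ _ rfl) hi) h3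
    · exact absurd (mk5 w (b j) (b (j+1)) (b (j+2)) (b (j+3))
        (Ne.symm (hbw j)) (Ne.symm (hbw (j+1))) (Ne.symm (hbw (j+2))) (Ne.symm (hbw (j+3)))
        (NE _ _ ((by decide : ∀ x : ZMod 4, x ≠ x + 1) j))
        (NE _ _ ((by decide : ∀ x : ZMod 4, x ≠ x + 2) j))
        (NE _ _ ((by decide : ∀ x : ZMod 4, x ≠ x + 3) j))
        (NE _ _ ((by decide : ∀ x : ZMod 4, x + 1 ≠ x + 2) j))
        (NE _ _ ((by decide : ∀ x : ZMod 4, x + 1 ≠ x + 3) j))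
        (NE _ _ ((by decide : ∀ x : ZMod 4, x + 2 ≠ x + 3) j))
        hj (step _ _ rfl) (step _ _ (by ring)) (step _ _ (by ring)) hi) hno5
  -- w has no out-arcs into the cycle
  have hOnone : ∀ j : ZMod 4, ¬ A w (b j) := by
    intro j hj
    rcases (by decide : ∀ j : ZMod 4, j = 0 ∨ j = 1 ∨ j = 2 ∨ j = 3) j with rfl|rfl|rfl|rfl
    · exact killIO 0 0 hp0 hj (by left; decide)
    · exact killIO 0 1 hp0 hj (by right; right; decide)
    · exact killIO d 2 hpd hj ((by decide : ∀ d : ZMod 4, d ≠ 0 →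
        (d - 2 = 0 ∨ d - 2 = 1 ∨ d - 2 = 3)) d hd0)
    · exact killIO 0 3 hp0 hj (by right; left; decide)
  -- hence w points to both wa and wb
  obtain ⟨a1, a2, ha12, ha1, ha2⟩ := exists_two_out w (hout w)
  have hclass : ∀ u : V, A w u → u = wa ∨ u = wb := by
    intro u hu
    rcases hbenum u with h | h | h | ⟨j, hj⟩
    · rw [h] at hu; exact absurd hu (hirr w)
    · exact Or.inl h
    · exact Or.inr h
    · rw [hj] at hu; exact absurd hu (hOnone j)
  have hWa : A w wa ∧ A w wb := by
    rcases hclass a1 ha1 with h1|h1 <;> rcases hclass a2 ha2 with h2|h2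
    · exact absurd (h1.trans h2.symm) ha12
    · exact ⟨h1 ▸ ha1, h2 ▸ ha2⟩
    · exact ⟨h2 ▸ ha2, h1 ▸ ha1⟩
    · exact absurd (h1.trans h2.symm) ha12
  obtain ⟨hwwa, hwwb⟩ := hWa
  -- the second out-neighbour of wa has nowhere to go
  have killIO2 : ∀ i j : ZMod 4, A (b i) w → A wa (b j) →
      i - j = 0 ∨ i - j = 2 ∨ i - j = 3 → False := by
    intro i j hi hj hdiff
    have hij : i = j + (i - j) := by ring
    rcases hdiff with h|h|h <;> rw [h] at hij <;> rw [hij] at hi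
    · rw [add_zero] at hi
      exact absurd (mk3 (b j) w wa (hbw j) (hbwa j) hwa hi hwwa hj) h3
    · exact absurd (mk5 w wa (b j) (b (j+1)) (b (j+2))
        hwa (Ne.symm (hbw j)) (Ne.symm (hbw (j+1))) (Ne.symm (hbw (j+2)))
        (Ne.symm (hbwa j)) (Ne.symm (hbwa (j+1))) (Ne.symm (hbwa (j+2)))
        (NE _ _ ((by decide : ∀ x : ZMod 4, x ≠ x + 1) j))
        (NE _ _ ((by decide : ∀ x : ZMod 4, x ≠ x + 2) j))
        (NE _ _ ((by decide : ∀ x : ZMod 4, x + 1 ≠ x + 2) j))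
        hwwa hj (step _ _ rfl) (step _ _ (by ring)) hi) hno5
    · exact absurd (mk6 w wa (b j) (b (j+1)) (b (j+2)) (b (j+3))
        hwa (Ne.symm (hbw j)) (Ne.symm (hbw (j+1))) (Ne.symm (hbw (j+2))) (Ne.symm (hbw (j+3)))
        (Ne.symm (hbwa j)) (Ne.symm (hbwa (j+1))) (Ne.symm (hbwa (j+2))) (Ne.symm (hbwa (j+3)))
        (NE _ _ ((by decide : ∀ x : ZMod 4, x ≠ x + 1) j))
        (NE _ _ ((by decide : ∀ x : ZMod 4, x ≠ x + 2) j))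
        (NE _ _ ((by decide : ∀ x : ZMod 4, x ≠ x + 3) j))
        (NE _ _ ((by decide : ∀ x : ZMod 4, x + 1 ≠ x + 2) j))
        (NE _ _ ((by decide : ∀ x : ZMod 4, x + 1 ≠ x + 3) j))
        (NE _ _ ((by decide : ∀ x : ZMod 4, x + 2 ≠ x + 3) j))
        hwwa hj (step _ _ rfl) (step _ _ (by ring)) (step _ _ (by ring)) hi) hno6
  obtain ⟨u, hune, hu⟩ := exists_out_ne wa wb (hout wa)
  rcases hbenum u with h | h | h | ⟨j, hj⟩
  · rw [h] at hu
    exact absurd (mk2 w wa hwa hwwa hu) h2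
  · rw [h] at hu; exact absurd hu (hirr wa)
  · exact hune h
  · rw [hj] at hu
    rcases (by decide : ∀ j : ZMod 4, j = 0 ∨ j = 1 ∨ j = 2 ∨ j = 3) j with rfl|rfl|rfl|rfl
    · exact killIO2 0 0 hp0 hu (by left; decide)
    · exact killIO2 0 1 hp0 hu (by right; right; decide)
    · exact killIO2 0 2 hp0 hu (by right; left; decide)
    · exact killIO2 d 3 hpd hu ((by decide : ∀ d : ZMod 4, d ≠ 0 →
        (d - 3 = 0 ∨ d - 3 = 2 ∨ d - 3 = 3)) d hd0)

lemma case4 [Fintype V] (hcard : Fintype.card V = 7)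
    (hirr : ∀ v, ¬ A v v) (h2 : ¬ HasDicycle A 2) (h3 : ¬ HasDicycle A 3)
    (hout : ∀ v, 2 ≤ outDeg A v)
    (hno5 : ¬ HasDicycle A 5) (hno6 : ¬ HasDicycle A 6)
    (hdc : HasDicycle A 4) : False := by
  obtain ⟨c, hinj, harc⟩ := hdc
  obtain ⟨w1, w2, w3, h12, h13, h23, hcne, henum⟩ := compl_three hcard c hinj
  have NE : ∀ (x y : ZMod 4), x ≠ y → c x ≠ c y := fun x y h => hinj.ne h
  have step : ∀ x y : ZMod 4, x + 1 = y → A (c x) (c y) := by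
    intro x y h; rw [← h]; exact harc x
  have covW : ∀ x : ZMod 4, A (c x) w1 ∨ A (c x) w2 ∨ A (c x) w3 := by
    intro x
    obtain ⟨u2, hneu, hu2⟩ := exists_out_ne (c x) (c (x+1)) (hout (c x))
    rcases henum u2 with h | h | h | ⟨j, hj⟩
    · rw [h] at hu2; exact Or.inl hu2
    · rw [h] at hu2; exact Or.inr (Or.inl hu2)
    · rw [h] at hu2; exact Or.inr (Or.inr hu2)
    · rw [hj] at hneu hu2
      have hjx : j = x + (j - x) := by ring
      rw [hjx] at hneu hu2
      rcases (by decide : ∀ e : ZMod 4, e = 0 ∨ e = 1 ∨ e = 2 ∨ e = 3) (j - x)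
        with h|h|h|h <;> rw [h] at hneu hu2
      · rw [add_zero] at hu2; exact absurd hu2 (hirr _)
      · exact absurd rfl hneu
      · exact absurd (mk3 (c x) (c (x+2)) (c (x+3))
          (NE _ _ ((by decide : ∀ x : ZMod 4, x ≠ x + 2) x))
          (NE _ _ ((by decide : ∀ x : ZMod 4, x ≠ x + 3) x))
          (NE _ _ ((by decide : ∀ x : ZMod 4, x + 2 ≠ x + 3) x))
          hu2 (step _ _ (by ring)) (step _ _ ((by decide : ∀ x : ZMod 4, x + 3 + 1 = x) x))) h3
      · exact absurd (mk2 (c x) (c (x+3))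
          (NE _ _ ((by decide : ∀ x : ZMod 4, x ≠ x + 3) x))
          hu2 (step _ _ ((by decide : ∀ x : ZMod 4, x + 3 + 1 = x) x))) h2
  -- pigeonhole over the three w's
  set g : ZMod 4 → Fin 3 := fun i => if A (c i) w1 then 0 else if A (c i) w2 then 1 else 2
    with hg
  have key : ∀ k : ZMod 4, (g k = 0 → A (c k) w1) ∧ (g k = 1 → A (c k) w2) ∧
      (g k = 2 → A (c k) w3) := by
    intro k
    refine ⟨?_, ?_, ?_⟩ <;> intro hk <;> simp only [hg] at hk <;>
        split_ifs at hk with hif1 hif2 <;>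
      first
      | exact hif1
      | exact hif2
      | exact absurd hk (by decide)
      | (rcases covW k with h|h|h
         · exact absurd h hif1
         · exact absurd h hif2
         · exact h)
  obtain ⟨i, j, hij, hgij⟩ := (by decide :
    ∀ g' : ZMod 4 → Fin 3, ∃ i j, i ≠ j ∧ g' i = g' j) g
  rcases (by decide : ∀ v : Fin 3, v = 0 ∨ v = 1 ∨ v = 2) (g i) with hv|hv|hv
  · exact case4core hirr h2 h3 hout hno5 hno6 c w1 w2 w3 hinj harc
      (Ne.symm h12).symm h13 h23
      (fun k => (hcne k).1) (fun k => (hcne k).2.1) (fun k => (hcne k).2.2) henum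
      i j hij ((key i).1 hv) ((key j).1 (hgij ▸ hv))
  · exact case4core hirr h2 h3 hout hno5 hno6 c w2 w1 w3 hinj harc
      (Ne.symm h12) h23 h13
      (fun k => (hcne k).2.1) (fun k => (hcne k).1) (fun k => (hcne k).2.2)
      (fun v => by rcases henum v with h|h|h|h
                   · exact Or.inr (Or.inl h)
                   · exact Or.inl h
                   · exact Or.inr (Or.inr (Or.inl h))
                   · exact Or.inr (Or.inr (Or.inr h)))
      i j hij ((key i).2.1 hv) ((key j).2.1 (hgij ▸ hv))
  · exact case4core hirr h2 h3 hout hno5 hno6 c w3 w1 w2 hinj harc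
      (Ne.symm h13) (Ne.symm h23) h12
      (fun k => (hcne k).2.2) (fun k => (hcne k).1) (fun k => (hcne k).2.1)
      (fun v => by rcases henum v with h|h|h|h
                   · exact Or.inr (Or.inl h)
                   · exact Or.inr (Or.inr (Or.inl h))
                   · exact Or.inl h
                   · exact Or.inr (Or.inr (Or.inr h)))
      i j hij ((key i).2.2 hv) ((key j).2.2 (hgij ▸ hv))

end Stmt15Aux

theorem stmt15 {V : Type*} [Fintype V] (hcard : Fintype.card V = 7)
    (A : V → V → Prop)
    (hirr : ∀ v, ¬ A v v) (hstrong : Strong A)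
    (h2 : ¬ HasDicycle A 2) (h3 : ¬ HasDicycle A 3)
    (hout : ∀ v, 2 ≤ outDeg A v) (hin : ∀ v, 1 ≤ inDeg A v) :
    ∃ e : V ≃ ZMod 7, ∀ u v : V, A u v ↔ C7 (e u) (e v) := by
  obtain ⟨ℓ0, hl1, hl7, hdc0⟩ := Stmt15Aux.exists_dicycle hcard hout
  have hdcL : HasDicycle A (Nat.findGreatest (HasDicycle A) 7) :=
    Nat.findGreatest_spec hl7 hdc0
  set L := Nat.findGreatest (HasDicycle A) 7 with hLdef
  have hL7 : L ≤ 7 := Nat.findGreatest_le 7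
  have hLge : ℓ0 ≤ L := Nat.le_findGreatest hl7 hdc0
  have hno : ∀ k, L < k → k ≤ 7 → ¬ HasDicycle A k :=
    fun k hk h7 => Nat.findGreatest_is_greatest hk h7
  have hL1 : L ≠ 1 := by
    intro h
    rw [h] at hdcL
    obtain ⟨c, hcinj, hcarc⟩ := hdcL
    have h0 := hcarc 0
    rw [(by decide : (0 + 1 : ZMod 1) = 0)] at h0
    exact hirr _ h0
  have hL2 : L ≠ 2 := fun h => h2 (h ▸ hdcL)
  have hL3 : L ≠ 3 := fun h => h3 (h ▸ hdcL)
  rcases (by omega : L = 4 ∨ L = 5 ∨ L = 6 ∨ L = 7) with hL|hL|hL|hL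
  · exact (Stmt15Aux.case4 hcard hirr h2 h3 hout
      (hno 5 (by omega) (by omega)) (hno 6 (by omega) (by omega)) (hL ▸ hdcL)).elim
  · exact (Stmt15Aux.case5 hcard hirr h2 h3 hout
      (hno 6 (by omega) (by omega)) (hno 7 (by omega) (by omega)) (hL ▸ hdcL)).elim
  · exact (Stmt15Aux.case6 hcard hirr h2 h3 hout hin
      (hno 7 (by omega) (by omega)) (hL ▸ hdcL)).elim
  · exact Stmt15Aux.case7 hcard hirr h2 h3 hout (hL ▸ hdcL)
end
end
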